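/- arXiv:1302.7085 — 8 statements merged into one kernel-verified Lean document; each statement's English description precedes it below -/
import Mathlib

section
/- Let G be a regular caterpillar with an odd number s = 2k+1 of spine vertices, each spine vertex having exactly Δ ≥ 1 legs, so that G has n = (2k+1)(Δ+1) vertices. Then the differential chromatic number of G is at most ⌈(n − Δ)/2⌉. -/
/-!
Suppose a labeling has differential value `d ≥ kΔ + k + 2`, so that `2d + Δ > n + 1`. The
vertices carrying the `d` largest labels form an independent set, and so do those carrying the
`d` smallest, because labels inside a window of length `d` differ by less than `d`. A spine
vertex labelled strictly between `d` and `n + 1 - d` would leave fewer than `Δ` labels for its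
legs, so every spine vertex lies in one of the two windows, and consecutive spine vertices lie
in different ones. The window containing the first spine vertex thus contains all `k + 1`
even spine vertices, hence no odd spine vertex and no leg of an even one: it has at most
`(k + 1) + kΔ < d` vertices.
-/

/-- A labeling of the vertices of a finite graph on `n` vertices: a one-to-one
assignment of the numbers `1, …, n` to the vertices. -/
def IsLabeling {V : Type*} [Fintype V] (c : V → ℕ) : Prop :=
  Function.Injective c ∧ ∀ v, c v ∈ Finset.Icc 1 (Fintype.card V)

/-- The differential value of the labeling `c` is at least `d`: every edge has
label difference at least `d`. -/
def DiffValAtLeast {V : Type*} (G : SimpleGraph V) (c : V → ℕ) (d : ℕ) : Prop :=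
  ∀ u v, G.Adj u v → d ≤ Nat.dist (c u) (c v)

/-- The differential chromatic number: the maximum, over all labelings, of the
minimum label difference over the edges. -/
noncomputable def diffChromNum {V : Type*} [Fintype V] (G : SimpleGraph V) : ℕ :=
  sSup {d : ℕ | ∃ c : V → ℕ, IsLabeling c ∧ DiffValAtLeast G c d}

/-- The regular caterpillar with spine vertices `(i, 0)` for `i : Fin s` forming a
path, each spine vertex `(i, 0)` adjacent to its `Δ` legs `(i, j)`, `j ≠ 0`. -/
def regularCaterpillar (s Δ : ℕ) : SimpleGraph (Fin s × Fin (Δ + 1)) :=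
  SimpleGraph.fromRel (fun a b =>
    (a.2 = 0 ∧ b.2 = 0 ∧ (a.1 : ℕ) + 1 = (b.1 : ℕ)) ∨
    (a.1 = b.1 ∧ a.2 = 0 ∧ b.2 ≠ 0))

open Finset

section Labeling

variable {V : Type*} [Fintype V] {c : V → ℕ}

theorem IsLabeling.image_univ (hc : IsLabeling c) :
    univ.image c = Icc 1 (Fintype.card V) :=
  eq_of_subset_of_card_le (fun _ hx ↦ by obtain ⟨v, -, rfl⟩ := mem_image.mp hx; exact hc.2 v)
    (by rw [card_image_of_injective _ hc.1, card_univ, Nat.card_Icc, Nat.add_sub_cancel])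

def labelWindow (c : V → ℕ) (a d : ℕ) : Finset V :=
  univ.filter fun v ↦ c v ∈ Ico a (a + d)

theorem IsLabeling.card_labelWindow (hc : IsLabeling c) {a d : ℕ} (ha : 1 ≤ a)
    (had : a + d ≤ Fintype.card V + 1) : #(labelWindow c a d) = d := by
  have himage : (labelWindow c a d).image c = Ico a (a + d) := by
    refine Subset.antisymm (fun x hx ↦ ?_) (fun x hx ↦ ?_)
    · obtain ⟨v, hv, rfl⟩ := mem_image.mp hx
      exact (mem_filter.mp hv).2
    · have hx' : x ∈ univ.image c := by
        rw [hc.image_univ, mem_Icc]; rw [mem_Ico] at hx; omega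
      obtain ⟨v, -, rfl⟩ := mem_image.mp hx'
      exact mem_image_of_mem c (mem_filter.mpr ⟨mem_univ v, hx⟩)
  rw [← card_image_of_injective _ hc.1, himage, Nat.card_Ico, Nat.add_sub_cancel_left]

variable {G : SimpleGraph V} {d : ℕ}

theorem DiffValAtLeast.isIndepSet_labelWindow (hd : DiffValAtLeast G c d) (a : ℕ) :
    G.IsIndepSet (labelWindow c a d : Set V) := by
  intro u hu v hv _ huv
  have := hd u v huv
  simp only [labelWindow, coe_filter, Set.mem_ofPred_eq, mem_Ico, mem_univ, true_and] at hu hv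
  unfold Nat.dist at this
  omega

/-- A vertex labelled `x` has all its neighbours labelled in `[1, x - d] ∪ [x + d, n]`. -/
theorem DiffValAtLeast.card_le_of_forall_adj (hc : IsLabeling c) (hd : DiffValAtLeast G c d)
    {v : V} {L : Finset V} (hL : ∀ w ∈ L, G.Adj v w) :
    #L ≤ (c v - d) + (Fintype.card V + 1 - (c v + d)) :=
  calc #L = #(L.image c) := (card_image_of_injective _ hc.1).symm
    _ ≤ #(Icc 1 (c v - d) ∪ Icc (c v + d) (Fintype.card V)) := by
      refine card_le_card fun x hx ↦ ?_
      obtain ⟨w, hw, rfl⟩ := mem_image.mp hx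
      have hvw := hd v w (hL w hw)
      have hw := hc.2 w
      unfold Nat.dist at hvw
      rw [mem_Icc] at hw
      rw [mem_union, mem_Icc, mem_Icc]
      omega
    _ ≤ _ := card_union_le _ _
    _ = _ := by rw [Nat.card_Icc, Nat.card_Icc, Nat.add_sub_cancel]

theorem DiffValAtLeast.mem_labelWindow_of_forall_adj (hc : IsLabeling c)
    (hd : DiffValAtLeast G c d) {v : V} {L : Finset V} (hL : ∀ w ∈ L, G.Adj v w)
    (hL_card : Fintype.card V + 1 < 2 * d + #L) :
    v ∈ labelWindow c (Fintype.card V + 1 - d) d ∨ v ∈ labelWindow c 1 d := by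
  have := hd.card_le_of_forall_adj hc hL
  have := mem_Icc.mp (hc.2 v)
  simp only [labelWindow, mem_filter, mem_univ, true_and, mem_Ico]
  omega

theorem DiffValAtLeast.lt_card_of_adj (hc : IsLabeling c) (hd : DiffValAtLeast G c d)
    {u v : V} (huv : G.Adj u v) : d < Fintype.card V := by
  have hdist := hd u v huv
  have := mem_Icc.mp (hc.2 u)
  have := mem_Icc.mp (hc.2 v)
  unfold Nat.dist at hdist
  omega

end Labeling

theorem Fin.even_of_alternating {n : ℕ} {p q : Fin (n + 1) → Prop} (hpq : ∀ i, p i ∨ q i)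
    (hp : ∀ i : Fin n, p i.castSucc → ¬ p i.succ) (hq : ∀ i : Fin n, q i.castSucc → ¬ q i.succ)
    (h0 : p 0) (i : Fin (n + 1)) (hi : Even (i : ℕ)) : p i := by
  suffices h : ∀ i : Fin (n + 1), (Even (i : ℕ) → p i) ∧ (¬ Even (i : ℕ) → q i) from (h i).1 hi
  intro i
  induction i using Fin.induction with
  | zero => exact ⟨fun _ ↦ h0, fun h ↦ absurd ⟨0, rfl⟩ h⟩
  | succ i ih =>
    rw [Fin.val_succ, Nat.even_add_one]
    rw [Fin.val_castSucc] at ih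
    exact ⟨fun h ↦ (hpq _).resolve_right (hq i (ih.2 h)),
      fun h ↦ (hpq _).resolve_left (hp i (ih.1 (not_not.mp h)))⟩

theorem Fin.card_univ_erase_zero (n : ℕ) : #(univ.erase (0 : Fin (n + 1))) = n := by
  simp

theorem Fin.card_filter_even_le (s : ℕ) : #{i : Fin s | Even (i : ℕ)} ≤ (s + 1) / 2 :=
  calc #{i : Fin s | Even (i : ℕ)} ≤ #(range ((s + 1) / 2)) := by
        refine card_le_card_of_injOn (fun i ↦ (i : ℕ) / 2) (fun i _ ↦ ?_) fun i hi j hj hij ↦ ?_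
        · simp only [coe_range, Set.mem_Iio]; omega
        · simp only [coe_filter, mem_univ, true_and, Set.mem_ofPred_eq, Nat.even_iff] at hi hj hij
          exact Fin.ext (by omega)
    _ = (s + 1) / 2 := card_range _

theorem Fin.card_filter_not_even_le (s : ℕ) : #{i : Fin s | ¬ Even (i : ℕ)} ≤ s / 2 :=
  calc #{i : Fin s | ¬ Even (i : ℕ)} ≤ #(range (s / 2)) := by
        refine card_le_card_of_injOn (fun i ↦ (i : ℕ) / 2) (fun i hi ↦ ?_) fun i hi j hj hij ↦ ?_
        · simp only [coe_filter, mem_univ, true_and, Set.mem_ofPred_eq, Nat.not_even_iff] at hi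
          simp only [coe_range, Set.mem_Iio]; omega
        · simp only [coe_filter, mem_univ, true_and, Set.mem_ofPred_eq, Nat.not_even_iff]
            at hi hj hij
          exact Fin.ext (by omega)
    _ = s / 2 := card_range _

namespace regularCaterpillar

section

variable {s Δ : ℕ}

theorem adj_spine {i j : Fin s} (h : (i : ℕ) + 1 = j) :
    (regularCaterpillar s Δ).Adj (i, 0) (j, 0) := by
  refine (SimpleGraph.fromRel_adj _ _ _).mpr ⟨fun hij ↦ ?_, .inl (.inl ⟨rfl, rfl, h⟩)⟩
  have := congrArg (fun v ↦ (v.1 : ℕ)) hij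
  simp only at this
  omega

theorem adj_leg (i : Fin s) {j : Fin (Δ + 1)} (hj : j ≠ 0) :
    (regularCaterpillar s Δ).Adj (i, 0) (i, j) :=
  (SimpleGraph.fromRel_adj _ _ _).mpr
    ⟨fun h ↦ hj (Prod.ext_iff.mp h).2.symm, .inl (.inr ⟨rfl, rfl, hj⟩)⟩

theorem adj_of_mem_legs {i : Fin s} {v : Fin s × Fin (Δ + 1)}
    (hv : v ∈ {i} ×ˢ univ.erase 0) : (regularCaterpillar s Δ).Adj (i, 0) v := by
  obtain ⟨hi, hj⟩ := mem_product.mp hv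
  rw [← Prod.mk.eta (p := v), mem_singleton.mp hi]
  exact adj_leg i (ne_of_mem_erase hj)

/-- Independence excludes the odd spine vertices and the legs of the even ones. -/
theorem card_le_of_isIndepSet {S : Finset (Fin s × Fin (Δ + 1))}
    (hS : (regularCaterpillar s Δ).IsIndepSet (S : Set _))
    (heven : ∀ i : Fin s, Even (i : ℕ) → (i, 0) ∈ S) :
    #S ≤ (s + 1) / 2 + s / 2 * Δ := by
  have hsub : S ⊆ ({i : Fin s | Even (i : ℕ)} : Finset _) ×ˢ {0} ∪
      ({i : Fin s | ¬ Even (i : ℕ)} : Finset _) ×ˢ univ.erase 0 := by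
    rintro ⟨i, j⟩ hij
    simp only [mem_union, mem_product, mem_filter, mem_univ, true_and, mem_singleton, mem_erase,
      and_true]
    by_cases hi : Even (i : ℕ) <;> by_cases hj : j = 0
    · exact .inl ⟨hi, hj⟩
    · have hadj := adj_leg i hj
      exact absurd hadj (hS (heven i hi) hij hadj.ne)
    · subst hj
      obtain ⟨m, hm⟩ := Nat.not_even_iff_odd.mp hi
      have hadj := adj_spine (Δ := Δ) (i := ⟨2 * m, by omega⟩) (j := i) hm.symm
      exact absurd hadj (hS (heven _ (even_two_mul m)) hij (by simp [Fin.ext_iff]; omega))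
    · exact .inr ⟨hi, hj⟩
  calc #S ≤ _ := card_le_card hsub
    _ ≤ _ := card_union_le _ _
    _ ≤ (s + 1) / 2 + s / 2 * Δ := by
      rw [card_product, card_product, card_singleton, mul_one, Fin.card_univ_erase_zero]
      exact add_le_add (Fin.card_filter_even_le s)
        (Nat.mul_le_mul_right _ (Fin.card_filter_not_even_le s))

end

theorem le_of_diffValAtLeast {k Δ d : ℕ} (hΔ : 1 ≤ Δ)
    {c : Fin (2 * k + 1) × Fin (Δ + 1) → ℕ} (hc : IsLabeling c)
    (hd : DiffValAtLeast (regularCaterpillar (2 * k + 1) Δ) c d) :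
    d ≤ k * Δ + k + 1 := by
  by_contra! hlarge
  set n := Fintype.card (Fin (2 * k + 1) × Fin (Δ + 1)) with hn_def
  have hn : n = 2 * (k * Δ) + 2 * k + Δ + 1 := by
    simp only [hn_def, Fintype.card_prod, Fintype.card_fin]; ring
  have hdn : d < n := hd.lt_card_of_adj hc (adj_leg 0 (j := ⟨1, by omega⟩)
    (Fin.ne_of_val_ne one_ne_zero))
  have hcover (i : Fin (2 * k + 1)) :
      (i, 0) ∈ labelWindow c (n + 1 - d) d ∨ (i, 0) ∈ labelWindow c 1 d :=
    hd.mem_labelWindow_of_forall_adj hc (fun _ ↦ adj_of_mem_legs) (by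
      rw [card_product, card_singleton, one_mul, Fin.card_univ_erase_zero]; omega)
  obtain ⟨S, S', hS, hS', hSS', h0, hcard⟩ : ∃ S S' : Finset (Fin (2 * k + 1) × Fin (Δ + 1)),
      (regularCaterpillar (2 * k + 1) Δ).IsIndepSet (S : Set _) ∧
      (regularCaterpillar (2 * k + 1) Δ).IsIndepSet (S' : Set _) ∧
      (∀ i : Fin (2 * k + 1), (i, 0) ∈ S ∨ (i, 0) ∈ S') ∧ (0, 0) ∈ S ∧ #S = d := by
    have htop := hc.card_labelWindow (a := n + 1 - d) (d := d) (by omega) (by omega)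
    have hbot := hc.card_labelWindow (a := 1) (d := d) le_rfl (by omega)
    rcases hcover 0 with h | h
    · exact ⟨_, _, hd.isIndepSet_labelWindow _, hd.isIndepSet_labelWindow _, hcover, h, htop⟩
    · exact ⟨_, _, hd.isIndepSet_labelWindow _, hd.isIndepSet_labelWindow _,
        fun i ↦ (hcover i).symm, h, hbot⟩
  have hspine (i : Fin (2 * k)) :
      (regularCaterpillar (2 * k + 1) Δ).Adj (i.castSucc, 0) (i.succ, 0) :=
    adj_spine (by simp)
  have heven := Fin.even_of_alternating (p := fun i ↦ (i, 0) ∈ S) (q := fun i ↦ (i, 0) ∈ S')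
    hSS' (fun i h h' ↦ hS h h' (hspine i).ne (hspine i))
    (fun i h h' ↦ hS' h h' (hspine i).ne (hspine i)) h0
  have hS_le := card_le_of_isIndepSet hS heven
  rw [show (2 * k + 1 + 1) / 2 = k + 1 by omega, show (2 * k + 1) / 2 = k by omega] at hS_le
  omega

end regularCaterpillar

/-- A regular caterpillar with an odd number `s = 2k+1` of spine vertices and
`Δ ≥ 1` legs per spine vertex, on `n = (2k+1)(Δ+1)` vertices, has differential
chromatic number at most `⌈(n − Δ)/2⌉`. -/
theorem stmt_1 (k Δ : ℕ) (hΔ : 1 ≤ Δ) :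
    diffChromNum (regularCaterpillar (2 * k + 1) Δ) ≤
      ((2 * k + 1) * (Δ + 1) - Δ + 1) / 2 := by
  have hn : (2 * k + 1) * (Δ + 1) = 2 * (k * Δ) + 2 * k + Δ + 1 := by ring
  rw [hn, show (2 * (k * Δ) + 2 * k + Δ + 1 - Δ + 1) / 2 = k * Δ + k + 1 by omega]
  refine csSup_le' ?_
  rintro d ⟨c, hc, hd⟩
  exact regularCaterpillar.le_of_diffValAtLeast hΔ hc hd
end

section
/- Let G be a regular caterpillar with an odd number s = 2k+1 of spine vertices, each spine vertex having exactly Δ ≥ 1 legs, so n = (2k+1)(Δ+1). If c is a labeling of G whose differential value is at least ⌈(n − Δ)/2⌉ + 1, then no spine vertex v satisfies ⌈(n − Δ)/2⌉ ≤ c(v) ≤ ⌈(n + Δ)/2⌉. -/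
/-!
Only the legs matter. A spine vertex `v` has `Δ` legs, whose labels are distinct numbers in
`[1, n]` at distance at least `d = ⌈(n - Δ)/2⌉ + 1` from `c v`. There are at most
`(c v - d) + (n + 1 - (c v + d))` such numbers, and for `c v` in `[⌈(n - Δ)/2⌉, ⌈(n + Δ)/2⌉]`
this is less than `Δ`.
-/

open Finset

theorem card_filter_le_dist_le (N a d : ℕ) :
    #{x ∈ Icc 1 N | d ≤ Nat.dist x a} ≤ (a - d) + (N + 1 - (a + d)) := by
  have hsub : {x ∈ Icc 1 N | d ≤ Nat.dist x a} ⊆ Icc 1 (a - d) ∪ Icc (a + d) N := by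
    intro x hx
    simp only [mem_filter, mem_Icc] at hx
    obtain ⟨⟨hx1, hxN⟩, hxd⟩ := hx
    rcases le_or_gt x a with h | h
    · rw [Nat.dist_eq_sub_of_le h] at hxd
      exact mem_union_left _ (mem_Icc.mpr ⟨hx1, by omega⟩)
    · rw [Nat.dist_eq_sub_of_le_right h.le] at hxd
      exact mem_union_right _ (mem_Icc.mpr ⟨by omega, hxN⟩)
  calc #{x ∈ Icc 1 N | d ≤ Nat.dist x a}
      ≤ #(Icc 1 (a - d) ∪ Icc (a + d) N) := card_le_card hsub
    _ ≤ #(Icc 1 (a - d)) + #(Icc (a + d) N) := card_union_le _ _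
    _ = (a - d) + (N + 1 - (a + d)) := by simp only [Nat.card_Icc]; omega

theorem IsLabeling.card_le_card_filter_dist {V : Type*} [Fintype V] {G : SimpleGraph V}
    {c : V → ℕ} {d : ℕ} (hc : IsLabeling c) (hd : DiffValAtLeast G c d) {v : V}
    {s : Finset V} (hs : ∀ u ∈ s, G.Adj v u) :
    #s ≤ #{x ∈ Icc 1 (Fintype.card V) | d ≤ Nat.dist x (c v)} := by
  refine card_le_card_of_injOn c (fun u hu => ?_) hc.1.injOn
  simp only [coe_filter, Set.mem_ofPred_eq]
  exact ⟨hc.2 u, Nat.dist_comm (c v) (c u) ▸ hd v u (hs u hu)⟩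

theorem regularCaterpillar_adj_leg {s Δ : ℕ} (i : Fin s) {j : Fin (Δ + 1)} (hj : j ≠ 0) :
    (regularCaterpillar s Δ).Adj (i, 0) (i, j) := by
  simp [regularCaterpillar, hj, Ne.symm hj]

/-- For a regular caterpillar with an odd number `s = 2k+1` of spine vertices and
`Δ ≥ 1` legs per spine vertex (`n = (2k+1)(Δ+1)`), any labeling whose differential
value is at least `⌈(n − Δ)/2⌉ + 1` assigns to no spine vertex a label in the
interval `[⌈(n − Δ)/2⌉, ⌈(n + Δ)/2⌉]`. -/
theorem stmt_2 (k Δ : ℕ) (hΔ : 1 ≤ Δ)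
    (c : Fin (2 * k + 1) × Fin (Δ + 1) → ℕ) (hc : IsLabeling c)
    (hd : DiffValAtLeast (regularCaterpillar (2 * k + 1) Δ) c
      (((2 * k + 1) * (Δ + 1) - Δ + 1) / 2 + 1)) :
    ∀ v : Fin (2 * k + 1) × Fin (Δ + 1), v.2 = 0 →
      ¬(((2 * k + 1) * (Δ + 1) - Δ + 1) / 2 ≤ c v ∧
        c v ≤ ((2 * k + 1) * (Δ + 1) + Δ + 1) / 2) := by
  rintro ⟨i, j⟩ (rfl : j = 0) ⟨hlo, hhi⟩
  have hlegs := hc.card_le_card_filter_dist hd (v := (i, 0))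
    (s := (univ.erase 0).map (Function.Embedding.sectR i _)) (by
      simp only [mem_map, mem_erase, Function.Embedding.sectR_apply]
      rintro _ ⟨j, ⟨hj, -⟩, rfl⟩
      exact regularCaterpillar_adj_leg i hj)
  have hcount := card_filter_le_dist_le (Fintype.card (Fin (2 * k + 1) × Fin (Δ + 1)))
    (c (i, 0)) (((2 * k + 1) * (Δ + 1) - Δ + 1) / 2 + 1)
  simp only [card_map, card_erase_of_mem (mem_univ _), card_univ, Fintype.card_fin,
    Fintype.card_prod] at hlegs hcount
  have hn : (2 * k + 1) * (Δ + 1) = 2 * (k * (Δ + 1)) + Δ + 1 := by ring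
  omega
end

section
/- Let G be a spider graph with p ≥ 1 legs (paths) attached to the center, and let N_e denote the number of vertices of G at even positive level (distance from the center). Then the differential chromatic number of G is at most N_e + 1. -/
/-- The spider graph with center `none` and `p` attached paths, the `i`-th path
having `ℓ i` vertices `some ⟨i, j⟩` (the vertex `some ⟨i, j⟩` is at level `j + 1`,
i.e. at distance `j + 1` from the center). -/
def spider (p : ℕ) (ℓ : Fin p → ℕ) : SimpleGraph (Option (Σ i : Fin p, Fin (ℓ i))) :=
  SimpleGraph.fromRel (fun a b =>
    (a = none ∧ ∃ (i : Fin p) (h : 0 < ℓ i), b = some ⟨i, ⟨0, h⟩⟩) ∨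
    (∃ (i : Fin p) (x y : Fin (ℓ i)), (x : ℕ) + 1 = (y : ℕ) ∧
      a = some ⟨i, x⟩ ∧ b = some ⟨i, y⟩))

/-- The number of vertices of the spider at even positive level (the vertex
`some ⟨i, j⟩` is at level `j + 1`). -/
def spiderNe (p : ℕ) (ℓ : Fin p → ℕ) : ℕ :=
  (Finset.univ.filter (fun v : Σ i : Fin p, Fin (ℓ i) => (v.2 : ℕ) % 2 = 1)).card

/-- The number of vertices of the spider at odd level. -/
def spiderNo (p : ℕ) (ℓ : Fin p → ℕ) : ℕ :=
  (Finset.univ.filter (fun v : Σ i : Fin p, Fin (ℓ i) => (v.2 : ℕ) % 2 = 0)).card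

/-!
If a labeling has differential value `d`, the vertices whose labels lie in a window of `d`
consecutive labels containing the label of the center form an independent set of size at least
`d` through the center. An independent set through the center avoids level 1 and, on each leg,
contains at most one vertex of each pair of levels `{2k, 2k + 1}`; so it has at most `N_e + 1`
vertices.
-/

open Finset

section Labeling

variable {V : Type*} [Fintype V] {G : SimpleGraph V} {c : V → ℕ} {d : ℕ}

theorem DiffValAtLeast.lt_card (hc : IsLabeling c) (hd : DiffValAtLeast G c d) {u w : V}
    (huw : G.Adj u w) : d < Fintype.card V := by
  have hu := mem_Icc.mp (hc.2 u)
  have hw := mem_Icc.mp (hc.2 w)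
  have := hd u w huw
  unfold Nat.dist at this
  omega

theorem DiffValAtLeast.exists_isIndepSet (hc : IsLabeling c) (hd : DiffValAtLeast G c d)
    (hdn : d ≤ Fintype.card V) (v : V) :
    ∃ s : Finset V, v ∈ s ∧ G.IsIndepSet s ∧ d ≤ #s := by
  obtain rfl | hd0 := Nat.eq_zero_or_pos d
  · exact ⟨{v}, mem_singleton_self v, by simp, Nat.zero_le _⟩
  set n := Fintype.card V
  have hcv := mem_Icc.mp (hc.2 v)
  -- a window of `d` consecutive labels in `[1, n]` containing `c v`
  set lo := min (c v) (n + 1 - d)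
  set window := Icc lo (lo + d - 1)
  let s := univ.filter fun w => c w ∈ window
  have hv : v ∈ s := by simp only [s, window, mem_filter, mem_univ, true_and, mem_Icc]; omega
  have hindep : G.IsIndepSet s := fun a ha b hb _ hadj => by
    have := hd a b hadj
    simp only [s, window, coe_filter, mem_univ, true_and, Set.mem_ofPred_eq, mem_Icc] at ha hb
    unfold Nat.dist at this
    omega
  have hout : #(univ.filter fun w => c w ∉ window) ≤ n - d :=
    calc _ ≤ #(Icc 1 n \ window) :=
          card_le_card_of_injOn c (fun w hw => by simp_all [n, mem_Icc.mp (hc.2 w)]) hc.1.injOn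
      _ = n - d := by
          rw [card_sdiff_of_subset (Icc_subset_Icc (by omega) (by omega)), Nat.card_Icc,
            Nat.card_Icc]
          omega
  have hsplit : #s + #(univ.filter fun w => c w ∉ window) = n :=
    card_filter_add_card_filter_not _
  exact ⟨s, hv, hindep, by omega⟩

end Labeling

section Spider

variable {p : ℕ} {ℓ : Fin p → ℕ}

theorem spider_adj_center (i : Fin p) (j : Fin (ℓ i)) (hj : (j : ℕ) = 0) :
    (spider p ℓ).Adj none (some ⟨i, j⟩) := by
  have hpos : 0 < ℓ i := by omega
  obtain rfl : j = ⟨0, hpos⟩ := Fin.ext hj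
  rw [spider, SimpleGraph.fromRel_adj]
  exact ⟨by simp, .inl (.inl ⟨rfl, i, hpos, rfl⟩)⟩

theorem spider_adj_succ (i : Fin p) (j k : Fin (ℓ i)) (hjk : (j : ℕ) + 1 = k) :
    (spider p ℓ).Adj (some ⟨i, j⟩) (some ⟨i, k⟩) := by
  simp only [spider, SimpleGraph.fromRel_adj]
  refine ⟨fun h => ?_, .inl (.inr ⟨i, j, k, hjk, rfl, rfl⟩)⟩
  simp only [Option.some.injEq, Sigma.mk.injEq, heq_eq_eq, true_and] at h
  omega

/-- Moves a leg vertex at odd level `2k + 1 ≥ 3` down to level `2k` and fixes the vertices at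
even level (recall that `⟨i, j⟩` is at level `j + 1`). -/
def spiderEvenFloor (p : ℕ) (ℓ : Fin p → ℕ) (v : Σ i : Fin p, Fin (ℓ i)) :
    Σ i : Fin p, Fin (ℓ i) :=
  ⟨v.1, ⟨v.2 - 1 + v.2 % 2, by omega⟩⟩

section IndepSet

variable {s : Finset (Option (Σ i : Fin p, Fin (ℓ i)))}

theorem spider_one_le_of_isIndepSet (hs : (spider p ℓ).IsIndepSet s) (hnone : none ∈ s)
    {i : Fin p} {j : Fin (ℓ i)} (hv : some ⟨i, j⟩ ∈ s) : 1 ≤ (j : ℕ) := by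
  by_contra! h
  exact hs hnone hv (by simp) (spider_adj_center i j (by omega))

theorem spider_injOn_map_spiderEvenFloor (hs : (spider p ℓ).IsIndepSet s) (hnone : none ∈ s) :
    Set.InjOn (Option.map (spiderEvenFloor p ℓ)) s := by
  rintro (_ | ⟨i, j⟩) ha (_ | ⟨i', j'⟩) hb hab <;>
    simp only [Option.map_none, Option.map_some, spiderEvenFloor, reduceCtorEq,
      Option.some.injEq, Sigma.mk.injEq] at hab ⊢
  obtain ⟨rfl, hab⟩ := hab
  simp only [heq_iff_eq, Fin.ext_iff, true_and] at hab ⊢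
  have := spider_one_le_of_isIndepSet hs hnone ha
  have := spider_one_le_of_isIndepSet hs hnone hb
  by_contra hne
  have hne' : (some ⟨i, j⟩ : Option (Σ i : Fin p, Fin (ℓ i))) ≠ some ⟨i, j'⟩ := by
    simp [Fin.ext_iff, hne]
  -- two distinct vertices with the same image are consecutive on the leg
  rcases (by omega : (j : ℕ) + 1 = j' ∨ (j' : ℕ) + 1 = j) with h | h
  · exact hs ha hb hne' (spider_adj_succ i j j' h)
  · exact hs ha hb hne' (spider_adj_succ i j' j h).symm

theorem spider_card_le_of_isIndepSet (hs : (spider p ℓ).IsIndepSet s) (hnone : none ∈ s) :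
    #s ≤ spiderNe p ℓ + 1 := by
  let evenLevel := univ.filter fun v : Σ i : Fin p, Fin (ℓ i) => (v.2 : ℕ) % 2 = 1
  have hmaps : Set.MapsTo (Option.map (spiderEvenFloor p ℓ)) s
      (insert none (evenLevel.map .some) : Finset (Option (Σ i : Fin p, Fin (ℓ i)))) := by
    rintro (_ | ⟨i, j⟩) hv
    · exact mem_insert_self _ _
    · have := spider_one_le_of_isIndepSet hs hnone hv
      refine mem_insert_of_mem (mem_map_of_mem _ (mem_filter.2 ⟨mem_univ _, ?_⟩))
      simp only [spiderEvenFloor]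
      omega
  calc #s ≤ #(insert none (evenLevel.map .some)) :=
        card_le_card_of_injOn _ hmaps (spider_injOn_map_spiderEvenFloor hs hnone)
    _ ≤ #evenLevel + 1 := by grw [card_insert_le, card_map]
    _ = spiderNe p ℓ + 1 := rfl

end IndepSet

end Spider

/-- A spider graph with `p ≥ 1` paths attached to the center and `N_e` vertices at
even positive level has differential chromatic number at most `N_e + 1`. -/
theorem stmt_3 (p : ℕ) (hp : 1 ≤ p) (ℓ : Fin p → ℕ) (hℓ : ∀ i, 1 ≤ ℓ i) :
    diffChromNum (spider p ℓ) ≤ spiderNe p ℓ + 1 := by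
  refine csSup_le' ?_
  rintro d ⟨c, hc, hd⟩
  have hleg : (spider p ℓ).Adj none (some ⟨⟨0, hp⟩, ⟨0, hℓ _⟩⟩) := spider_adj_center _ _ rfl
  obtain ⟨s, hnone, hs, hds⟩ := hd.exists_isIndepSet hc (hd.lt_card hc hleg).le none
  exact hds.trans (spider_card_le_of_isIndepSet hs hnone)
end

section
/- Let G be a regular caterpillar with an odd number s = 2k+1 of spine vertices, each spine vertex having exactly Δ ≥ 1 legs, so that G has n = (2k+1)(Δ+1) vertices. Then there exists a labeling of G with differential value at least ⌈(n − Δ)/2⌉; consequently the differential chromatic number of G equals ⌈(n − Δ)/2⌉. -/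
/-! Lower bound: the even spine vertices take the `k + 1` smallest labels, the odd ones the `k`
largest, and the legs the labels in between, in blocks of `Δ`: first the legs of the odd spine
vertices, then those of the even ones. Every edge then spans more than `k(Δ+1)` labels.

Upper bound: only the `2k+1` disjoint stars matter. Suppose every edge spans `d ≥ k(Δ+1)+2`
labels. A centre with `Δ` legs at distance `≥ d` cannot sit in the middle of `[1, n]`: either it
is low and all its legs are above `d`, or it is high and all its legs are at most `n - d`. The
intervals `[1, n - d]` and `[d + 1, n]` have at most `k(Δ+1) + Δ - 1` elements, and they contain
`#L + #H Δ` resp. `#H + #L Δ` labels, where `L`, `H` are the stars with low and high centres.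
As one of `#L`, `#H` exceeds `k`, one of these counts is at least `k(Δ+1) + Δ`. -/

open Finset

section

variable {V : Type*}

theorem DiffValAtLeast.mono {G H : SimpleGraph V} {c : V → ℕ} {d : ℕ} (hHG : H ≤ G)
    (h : DiffValAtLeast G c d) : DiffValAtLeast H c d :=
  fun u v huv => h u v (hHG huv)

theorem DiffValAtLeast.of_fromRel {r : V → V → Prop} {c : V → ℕ} {d : ℕ}
    (h : ∀ u v, r u v → d ≤ Nat.dist (c u) (c v)) :
    DiffValAtLeast (SimpleGraph.fromRel r) c d := by
  rintro u v ⟨-, huv | hvu⟩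
  · exact h u v huv
  · exact Nat.dist_comm (c v) (c u) ▸ h v u hvu

theorem diffChromNum_eq [Fintype V] {G : SimpleGraph V} {d : ℕ}
    (hex : ∃ c, IsLabeling c ∧ DiffValAtLeast G c d)
    (hle : ∀ c d', IsLabeling c → DiffValAtLeast G c d' → d' ≤ d) :
    diffChromNum G = d :=
  IsGreatest.csSup_eq ⟨hex, by rintro d' ⟨c, hc, hd⟩; exact hle c d' hc hd⟩

end

theorem Nat.eq_and_eq_of_mul_add_eq_mul_add {t t' Δ j j' : ℕ} (hj : 1 ≤ j) (hjΔ : j ≤ Δ)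
    (hj' : 1 ≤ j') (hj'Δ : j' ≤ Δ) (h : t * Δ + j = t' * Δ + j') : t = t' ∧ j = j' := by
  have step : ∀ {a b : ℕ}, a < b → a * Δ + Δ ≤ b * Δ := fun hab => by
    simpa [Nat.succ_mul] using Nat.mul_le_mul_right Δ hab
  rcases lt_trichotomy t t' with hlt | rfl | hgt
  · have := step hlt; omega
  · omega
  · have := step hgt; omega

theorem add_card_le_or_add_card_le {x d n : ℕ} {S : Finset ℕ} (hS : S ⊆ Icc 1 n)
    (hpos : 0 < #S) (hfar : ∀ y ∈ S, d ≤ Nat.dist x y) (hsmall : n + 1 < 2 * d + #S) :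
    x + d + #S ≤ n + 1 ∨ d + #S ≤ x := by
  have hsplit : S ⊆ Icc 1 (x - d) ∪ Icc (x + d) n := by
    intro y hy
    have hyn := mem_Icc.mp (hS hy)
    have hxy := hfar y hy
    simp only [mem_union, mem_Icc, Nat.dist] at hxy ⊢
    omega
  have hcard := (card_le_card hsplit).trans (card_union_le _ _)
  simp only [Nat.card_Icc] at hcard
  omega

theorem le_max_add_mul_add_mul {a b k Δ : ℕ} (hab : a + b = 2 * k + 1) (hΔ : 1 ≤ Δ) :
    k * (Δ + 1) + Δ ≤ max (a + b * Δ) (b + a * Δ) := by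
  rcases le_or_gt (k + 1) a with ha | ha
  · have := Nat.mul_le_mul_right (Δ - 1) ha
    refine le_max_of_le_right ?_
    zify [hΔ] at *
    nlinarith
  · have := Nat.mul_le_mul_right (Δ - 1) (show k + 1 ≤ b by omega)
    refine le_max_of_le_left ?_
    zify [hΔ] at *
    nlinarith

theorem card_vertices {s Δ : ℕ} : Fintype.card (Fin s × Fin (Δ + 1)) = s * (Δ + 1) := by simp

def starForest (s Δ : ℕ) : SimpleGraph (Fin s × Fin (Δ + 1)) :=
  SimpleGraph.fromRel (fun a b => a.1 = b.1 ∧ a.2 = 0 ∧ b.2 ≠ 0)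

theorem starForest_le_regularCaterpillar (s Δ : ℕ) :
    starForest s Δ ≤ regularCaterpillar s Δ := by
  intro u v huv
  simp only [starForest, regularCaterpillar, SimpleGraph.fromRel_adj] at huv ⊢
  tauto

namespace starForest

section

variable {s Δ d : ℕ} {c : Fin s × Fin (Δ + 1) → ℕ}

theorem adj_leg (i : Fin s) {j : Fin (Δ + 1)} (hj : j ≠ 0) :
    (starForest s Δ).Adj (i, 0) (i, j) :=
  (SimpleGraph.fromRel_adj _ _ _).mpr
    ⟨fun h => hj (congrArg Prod.snd h).symm, .inl ⟨rfl, rfl, hj⟩⟩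

theorem label_mem (hc : IsLabeling c) (v : Fin s × Fin (Δ + 1)) :
    c v ∈ Icc 1 (s * (Δ + 1)) :=
  card_vertices (s := s) (Δ := Δ) ▸ hc.2 v

theorem center_near_end (hc : IsLabeling c) (hd : DiffValAtLeast (starForest s Δ) c d)
    (hΔ : 1 ≤ Δ) (hsmall : s * (Δ + 1) + 1 < 2 * d + Δ) (i : Fin s) :
    c (i, 0) + d + Δ ≤ s * (Δ + 1) + 1 ∨ d + Δ ≤ c (i, 0) := by
  set S := (univ.erase (0 : Fin (Δ + 1))).image fun j => c (i, j)
  have hS : #S = Δ := by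
    rw [card_image_of_injective _ fun j j' h => (Prod.ext_iff.mp (hc.1 h)).2,
      card_erase_of_mem (mem_univ _), card_univ, Fintype.card_fin, Nat.add_sub_cancel]
  have hS_sub : S ⊆ Icc 1 (s * (Δ + 1)) := by
    rintro _ hy
    obtain ⟨j, -, rfl⟩ := mem_image.mp hy
    exact label_mem hc _
  have hfar : ∀ y ∈ S, d ≤ Nat.dist (c (i, 0)) y := by
    rintro _ hy
    obtain ⟨j, hj, rfl⟩ := mem_image.mp hy
    exact hd _ _ (adj_leg i (ne_of_mem_erase hj))
  simpa only [hS] using add_card_le_or_add_card_le hS_sub (by omega) hfar (by omega)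

theorem card_add_card_compl_mul_le (hc : IsLabeling c) (T : Finset (Fin s)) {a b : ℕ}
    (hcenter : ∀ i ∈ T, c (i, 0) ∈ Icc a b)
    (hleg : ∀ i ∉ T, ∀ j : Fin (Δ + 1), j ≠ 0 → c (i, j) ∈ Icc a b) :
    #T + #Tᶜ * Δ ≤ b + 1 - a := by
  set P := T ×ˢ {(0 : Fin (Δ + 1))} ∪ Tᶜ ×ˢ univ.erase 0
  have hdisj : Disjoint (T ×ˢ {(0 : Fin (Δ + 1))}) (Tᶜ ×ˢ univ.erase 0) :=
    disjoint_left.mpr fun p hp hp' => (mem_compl.mp (mem_product.mp hp').1) (mem_product.mp hp).1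
  have hP : #P = #T + #Tᶜ * Δ := by
    rw [card_union_of_disjoint hdisj, card_product, card_product, card_singleton,
      card_erase_of_mem (mem_univ _), card_univ, Fintype.card_fin, mul_one, Nat.add_sub_cancel]
  have hmaps : ∀ p ∈ P, c p ∈ Icc a b := by
    rintro ⟨i, j⟩ hp
    rcases mem_union.mp hp with hp | hp <;> obtain ⟨hi, hj⟩ := mem_product.mp hp
    · rw [show j = 0 from mem_singleton.mp hj]
      exact hcenter i hi
    · exact hleg i (mem_compl.mp hi) j (ne_of_mem_erase hj)
  rw [← hP, ← Nat.card_Icc]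
  exact card_le_card_of_injOn c hmaps hc.1.injOn

end

theorem diffVal_le {k Δ d : ℕ} (hΔ : 1 ≤ Δ) {c : Fin (2 * k + 1) × Fin (Δ + 1) → ℕ}
    (hc : IsLabeling c) (hd : DiffValAtLeast (starForest (2 * k + 1) Δ) c d) :
    d ≤ k * (Δ + 1) + 1 := by
  by_contra! hgt
  have hn : (2 * k + 1) * (Δ + 1) = 2 * (k * (Δ + 1)) + Δ + 1 := by ring
  have hnear := center_near_end hc hd hΔ (by omega)
  have hleg : ∀ i (j : Fin (Δ + 1)), j ≠ 0 → d ≤ Nat.dist (c (i, 0)) (c (i, j)) :=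
    fun i j hj => hd _ _ (adj_leg i hj)
  set n := (2 * k + 1) * (Δ + 1)
  have hmem : ∀ v, 1 ≤ c v ∧ c v ≤ n := fun v => mem_Icc.mp (label_mem hc v)
  set L := univ.filter fun i => c (i, 0) + d + Δ ≤ n + 1
  have hL : ∀ i, i ∈ L ↔ c (i, 0) + d + Δ ≤ n + 1 := by simp [L]
  have hcenter : ∀ i, (i ∈ L → c (i, 0) ≤ n - d) ∧ (i ∉ L → d + 1 ≤ c (i, 0)) := by
    intro i
    have := hnear i
    rw [hL]
    omega
  have hlegs : ∀ i (j : Fin (Δ + 1)), j ≠ 0 →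
      (i ∈ L → d + 1 ≤ c (i, j)) ∧ (i ∉ L → c (i, j) ≤ n - d) := by
    intro i j hj
    have := hmem (i, 0)
    have := hmem (i, j)
    have hdist := hleg i j hj
    have := hnear i
    rw [hL]
    unfold Nat.dist at hdist
    omega
  have hlow := card_add_card_compl_mul_le hc L (a := 1) (b := n - d)
    (fun i hi => mem_Icc.mpr ⟨(hmem _).1, (hcenter i).1 hi⟩)
    (fun i hi j hj => mem_Icc.mpr ⟨(hmem _).1, (hlegs i j hj).2 hi⟩)
  have hhigh := card_add_card_compl_mul_le hc Lᶜ (a := d + 1) (b := n)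
    (fun i hi => mem_Icc.mpr ⟨(hcenter i).2 (mem_compl.mp hi), (hmem _).2⟩)
    (fun i hi j hj => mem_Icc.mpr ⟨(hlegs i j hj).1 (by simpa using hi), (hmem _).2⟩)
  rw [compl_compl] at hhigh
  have hsum : #L + #Lᶜ = 2 * k + 1 := by rw [card_add_card_compl, Fintype.card_fin]
  have := le_max_add_mul_add_mul hsum hΔ
  omega

end starForest

/-- The rank of the block of labels given to the legs of spine vertex `i`. -/
def spineOrder (k i : ℕ) : ℕ := if i % 2 = 0 then k + i / 2 else i / 2

theorem spineOrder_lt {k i : ℕ} (hi : i < 2 * k + 1) : spineOrder k i < 2 * k + 1 := by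
  unfold spineOrder; split_ifs <;> omega

theorem spineOrder_injOn {k i i' : ℕ} (hi : i < 2 * k + 1) (hi' : i' < 2 * k + 1)
    (h : spineOrder k i = spineOrder k i') : i = i' := by
  unfold spineOrder at h; split_ifs at h <;> omega

def caterpillarLabel (k Δ i j : ℕ) : ℕ :=
  if j = 0 then (if i % 2 = 0 then i / 2 + 1 else (2 * k + 1) * (Δ + 1) - k + i / 2 + 1)
  else k + 1 + spineOrder k i * Δ + j

theorem two_mul_add_one_mul_add_one (k Δ : ℕ) :
    (2 * k + 1) * (Δ + 1) = 2 * (k * Δ) + 2 * k + Δ + 1 := by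
  ring

namespace caterpillarLabel

variable {k Δ i i' j j' : ℕ}

theorem spine_mem (hi : i < 2 * k + 1) :
    caterpillarLabel k Δ i 0 ∈
      Icc 1 (k + 1) ∪ Icc ((2 * k + 1) * (Δ + 1) - k + 1) ((2 * k + 1) * (Δ + 1)) := by
  have := two_mul_add_one_mul_add_one k Δ
  simp only [caterpillarLabel, if_pos, mem_union, mem_Icc]
  split_ifs <;> omega

theorem leg_mem (hi : i < 2 * k + 1) (hj : j ≠ 0) (hjΔ : j ≤ Δ) :
    caterpillarLabel k Δ i j ∈ Icc (k + 2) ((2 * k + 1) * (Δ + 1) - k) := by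
  have := two_mul_add_one_mul_add_one k Δ
  have : spineOrder k i * Δ ≤ 2 * (k * Δ) := by
    have := Nat.mul_le_mul_right Δ (Nat.le_of_lt_succ (spineOrder_lt hi)); linarith
  simp only [caterpillarLabel, if_neg hj, mem_Icc]
  omega

theorem mem_Icc_card (hi : i < 2 * k + 1) (hj : j ≤ Δ) :
    caterpillarLabel k Δ i j ∈ Icc 1 ((2 * k + 1) * (Δ + 1)) := by
  have := two_mul_add_one_mul_add_one k Δ
  rcases eq_or_ne j 0 with rfl | hj0
  · have := spine_mem (Δ := Δ) hi
    simp only [mem_union, mem_Icc] at *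
    omega
  · have := leg_mem hi hj0 hj
    simp only [mem_Icc] at *
    omega

theorem injOn (hi : i < 2 * k + 1) (hi' : i' < 2 * k + 1) (hj : j ≤ Δ) (hj' : j' ≤ Δ)
    (h : caterpillarLabel k Δ i j = caterpillarLabel k Δ i' j') : i = i' ∧ j = j' := by
  rcases eq_or_ne j 0 with rfl | hj0 <;> rcases eq_or_ne j' 0 with rfl | hj0'
  · have := two_mul_add_one_mul_add_one k Δ
    simp only [caterpillarLabel, if_pos] at h
    split_ifs at h <;> omega
  · have := spine_mem (Δ := Δ) hi
    have := leg_mem hi' hj0' hj'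
    simp only [mem_union, mem_Icc] at *
    omega
  · have := leg_mem hi hj0 hj
    have := spine_mem (Δ := Δ) hi'
    simp only [mem_union, mem_Icc] at *
    omega
  · simp only [caterpillarLabel, if_neg hj0, if_neg hj0'] at h
    obtain ⟨hσ, rfl⟩ := Nat.eq_and_eq_of_mul_add_eq_mul_add (t := spineOrder k i)
      (t' := spineOrder k i') (Nat.one_le_iff_ne_zero.mpr hj0) hj (Nat.one_le_iff_ne_zero.mpr hj0')
      hj' (by omega)
    exact ⟨spineOrder_injOn hi hi' hσ, rfl⟩

theorem dist_spine (hΔ : 1 ≤ Δ) :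
    k * (Δ + 1) + 1 ≤
      Nat.dist (caterpillarLabel k Δ i 0) (caterpillarLabel k Δ (i + 1) 0) := by
  have := two_mul_add_one_mul_add_one k Δ
  have : k * (Δ + 1) = k * Δ + k := by ring
  have : k ≤ k * Δ := Nat.le_mul_of_pos_right k hΔ
  simp only [caterpillarLabel, if_pos, Nat.dist]
  split_ifs <;> omega

theorem dist_leg (hi : i < 2 * k + 1) (hj : j ≠ 0) (hjΔ : j ≤ Δ) :
    k * (Δ + 1) + 1 ≤ Nat.dist (caterpillarLabel k Δ i 0) (caterpillarLabel k Δ i j) := by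
  have := two_mul_add_one_mul_add_one k Δ
  have : k * (Δ + 1) = k * Δ + k := by ring
  have hΔ : 1 ≤ Δ := by omega
  obtain ⟨t, rfl | rfl⟩ := Nat.even_or_odd' i
  · have : (k + t) * Δ = k * Δ + t * Δ := by ring
    have : t ≤ t * Δ := Nat.le_mul_of_pos_right t hΔ
    simp only [caterpillarLabel, spineOrder, if_neg hj, Nat.mul_mod_right, if_pos, Nat.dist,
      Nat.mul_div_cancel_left t two_pos]
    omega
  · have : (k - t) * Δ + t * Δ = k * Δ := by rw [← add_mul, Nat.sub_add_cancel (by omega)]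
    have : k - t ≤ (k - t) * Δ := Nat.le_mul_of_pos_right _ hΔ
    have h1 : (2 * t + 1) % 2 = 1 := by omega
    have h2 : (2 * t + 1) / 2 = t := by omega
    simp only [caterpillarLabel, spineOrder, if_neg hj, h1, h2, one_ne_zero, if_false, if_pos,
      Nat.dist]
    omega

end caterpillarLabel

theorem exists_labeling_regularCaterpillar {k Δ : ℕ} (hΔ : 1 ≤ Δ) :
    ∃ c : Fin (2 * k + 1) × Fin (Δ + 1) → ℕ, IsLabeling c ∧
      DiffValAtLeast (regularCaterpillar (2 * k + 1) Δ) c (k * (Δ + 1) + 1) := by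
  refine ⟨fun v => caterpillarLabel k Δ v.1 v.2, ⟨fun u v h => ?_, fun v => ?_⟩,
    DiffValAtLeast.of_fromRel ?_⟩
  · obtain ⟨h1, h2⟩ := caterpillarLabel.injOn u.1.isLt v.1.isLt (Nat.le_of_lt_succ u.2.isLt)
      (Nat.le_of_lt_succ v.2.isLt) h
    exact Prod.ext (Fin.ext h1) (Fin.ext h2)
  · rw [card_vertices]
    exact caterpillarLabel.mem_Icc_card v.1.isLt (Nat.le_of_lt_succ v.2.isLt)
  · rintro ⟨i, j⟩ ⟨i', j'⟩ (⟨rfl, rfl, h⟩ | ⟨rfl, rfl, hj⟩)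
    · simp only at h
      simp only [Fin.val_zero, ← h]
      exact caterpillarLabel.dist_spine hΔ
    · exact caterpillarLabel.dist_leg i.isLt (Fin.val_ne_zero_iff.mpr hj)
        (Nat.le_of_lt_succ j'.isLt)

/-- A regular caterpillar with an odd number `s = 2k+1` of spine vertices and
`Δ ≥ 1` legs per spine vertex (`n = (2k+1)(Δ+1)`) admits a labeling of
differential value at least `⌈(n − Δ)/2⌉`, and its differential chromatic number
equals `⌈(n − Δ)/2⌉`. -/
theorem stmt_7 (k Δ : ℕ) (hΔ : 1 ≤ Δ) :
    (∃ c : Fin (2 * k + 1) × Fin (Δ + 1) → ℕ, IsLabeling c ∧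
      DiffValAtLeast (regularCaterpillar (2 * k + 1) Δ) c
        (((2 * k + 1) * (Δ + 1) - Δ + 1) / 2)) ∧
    diffChromNum (regularCaterpillar (2 * k + 1) Δ) =
      ((2 * k + 1) * (Δ + 1) - Δ + 1) / 2 := by
  have hval : ((2 * k + 1) * (Δ + 1) - Δ + 1) / 2 = k * (Δ + 1) + 1 := by
    have : (2 * k + 1) * (Δ + 1) = 2 * (k * (Δ + 1)) + Δ + 1 := by ring
    omega
  have hex := exists_labeling_regularCaterpillar (k := k) hΔ
  rw [hval]
  exact ⟨hex, diffChromNum_eq hex fun c d hc hd =>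
    starForest.diffVal_le hΔ hc (hd.mono (starForest_le_regularCaterpillar _ _))⟩
end

section
/- Let G be a spider graph with p ≥ 1 paths attached to the center in which every attached path has an even number of vertices, and let N_e be the number of vertices of G at even positive level. Then there exists a labeling of G with differential value at least N_e; consequently the differential chromatic number of G equals N_e. -/
open Finset

section Labeling

variable {V : Type*} [Fintype V]

theorem isLabeling_of_equiv {n : ℕ} (e : V ≃ Fin n) : IsLabeling fun v => (e v : ℕ) + 1 := by
  refine ⟨fun u v h => e.injective (Fin.ext (Nat.add_right_cancel h)), fun v => ?_⟩
  rw [Fintype.card_congr e, Fintype.card_fin, mem_Icc]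
  exact ⟨Nat.le_add_left 1 _, (e v).isLt⟩

theorem IsLabeling.exists_apply_eq {c : V → ℕ} (hc : IsLabeling c) {k : ℕ}
    (hk : k ∈ Icc 1 (Fintype.card V)) : ∃ v, c v = k := by
  have himage : univ.image c = Icc 1 (Fintype.card V) :=
    eq_of_subset_of_card_le (image_subset_iff.mpr fun v _ => hc.2 v)
      (by rw [card_image_of_injective _ hc.1, Nat.card_Icc, card_univ]; omega)
  rw [← himage] at hk
  simpa using hk

theorem DiffValAtLeast.le_card_div_two [Nonempty V] {G : SimpleGraph V} {c : V → ℕ} {d : ℕ}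
    (hG : ∀ v, ∃ u, G.Adj u v) (hc : IsLabeling c) (hd : DiffValAtLeast G c d) :
    d ≤ Fintype.card V / 2 := by
  have hpos := Fintype.card_pos (α := V)
  obtain ⟨v, hv⟩ := hc.exists_apply_eq (k := (Fintype.card V + 1) / 2) (by rw [mem_Icc]; omega)
  obtain ⟨u, huv⟩ := hG v
  have hu := mem_Icc.mp (hc.2 u)
  have := hd u v huv
  rw [hv, Nat.dist] at this
  omega

theorem diffChromNum_eq_card_div_two [Nonempty V] {G : SimpleGraph V} {c : V → ℕ}
    (hG : ∀ v, ∃ u, G.Adj u v) (hc : IsLabeling c)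
    (hd : DiffValAtLeast G c (Fintype.card V / 2)) :
    diffChromNum G = Fintype.card V / 2 :=
  IsGreatest.csSup_eq ⟨⟨c, hc, hd⟩, fun _ ⟨_, hc', hd'⟩ => hd'.le_card_div_two hG hc'⟩

end Labeling

theorem diffValAtLeast_fromRel {V : Type*} {r : V → V → Prop}
    {c : V → ℕ} {d : ℕ} (hr : ∀ u v, r u v → d ≤ Nat.dist (c u) (c v)) :
    DiffValAtLeast (SimpleGraph.fromRel r) c d := by
  rintro u v ⟨-, huv | hvu⟩
  · exact hr u v huv
  · exact Nat.dist_comm (c u) (c v) ▸ hr v u hvu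

theorem Finset.card_filter_range_mod_two_eq_one (n : ℕ) : #{j ∈ range n | j % 2 = 1} = n / 2 := by
  induction n with
  | zero => rfl
  | succ n ih =>
    rw [range_add_one, filter_insert]
    split_ifs with h
    · rw [card_insert_of_notMem (by simp), ih]; omega
    · rw [ih]; omega

theorem finSigmaFinEquiv_mk_of_le {m : ℕ} {n : Fin m → ℕ} (i : Fin m) {k k' : Fin (n i)}
    (h : k ≤ k') :
    (finSigmaFinEquiv (⟨i, k'⟩ : Σ i, Fin (n i)) : ℕ) =
      finSigmaFinEquiv (⟨i, k⟩ : Σ i, Fin (n i)) + (k' - k) := by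
  simp only [finSigmaFinEquiv_apply]
  omega

section Spider

variable {p : ℕ} {ℓ : Fin p → ℕ}

theorem spider_adj_none_some (i : Fin p) (h : 0 < ℓ i) :
    (spider p ℓ).Adj none (some ⟨i, ⟨0, h⟩⟩) := by
  rw [spider, SimpleGraph.fromRel_adj]
  exact ⟨by simp, Or.inl (Or.inl ⟨rfl, i, h, rfl⟩)⟩

theorem spider_adj_some_some (i : Fin p) (x y : Fin (ℓ i)) (h : (x : ℕ) + 1 = y) :
    (spider p ℓ).Adj (some ⟨i, x⟩) (some ⟨i, y⟩) := by
  simp only [spider, SimpleGraph.fromRel_adj]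
  exact ⟨by rintro ⟨⟩; omega, Or.inl (Or.inr ⟨i, x, y, h, rfl, rfl⟩)⟩

theorem spider_exists_adj (hp : 1 ≤ p) (hℓ : ∀ i, 1 ≤ ℓ i) :
    ∀ v, ∃ u, (spider p ℓ).Adj u v
  | none => ⟨_, (spider_adj_none_some ⟨0, hp⟩ (hℓ _)).symm⟩
  | some ⟨i, ⟨0, h⟩⟩ => ⟨none, spider_adj_none_some i h⟩
  | some ⟨i, ⟨j + 1, h⟩⟩ => ⟨some ⟨i, ⟨j, by omega⟩⟩, spider_adj_some_some i _ _ rfl⟩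

theorem spiderNe_eq_sum : spiderNe p ℓ = ∑ i, ℓ i / 2 := by
  rw [spiderNe, ← univ_sigma_univ, filter_sigma, card_sigma]
  refine sum_congr rfl fun i _ => ?_
  rw [← card_filter_range_mod_two_eq_one, ← Nat.Iio_eq_range, ← Fin.map_valEmbedding_univ,
    filter_map, card_map]
  rfl

def spiderRank (heven : ∀ i, Even (ℓ i)) (i : Fin p) (j : Fin (ℓ i)) : Fin (∑ i, ℓ i / 2) :=
  finSigmaFinEquiv (⟨i, ⟨j / 2, Nat.div_lt_div_of_lt_of_dvd (heven i).two_dvd j.2⟩⟩ :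
    Σ i, Fin (ℓ i / 2))

theorem spiderRank_of_le (heven : ∀ i, Even (ℓ i)) (i : Fin p) {j j' : Fin (ℓ i)} (h : j ≤ j') :
    (spiderRank heven i j' : ℕ) = spiderRank heven i j + (j' / 2 - j / 2) :=
  finSigmaFinEquiv_mk_of_le i (Nat.div_le_div_right (c := 2) h)

def spiderLabelEquiv (heven : ∀ i, Even (ℓ i)) :
    Option (Σ i : Fin p, Fin (ℓ i)) ≃ Fin (2 * ∑ i, ℓ i / 2 + 1) :=
  ((((Equiv.sigmaCongrRight fun i =>
      (finCongr (Nat.div_two_mul_two_of_even (heven i)).symm).trans finProdFinEquiv.symm).trans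
    (Equiv.sigmaProdDistrib _ _).symm).trans
    ((finSigmaFinEquiv.trans Fin.revPerm).prodCongr (Equiv.refl _))).trans
    ((Equiv.prodComm _ _).trans finProdFinEquiv)).optionCongr.trans finSuccEquivLast.symm

theorem spiderLabelEquiv_none (heven : ∀ i, Even (ℓ i)) :
    spiderLabelEquiv heven none = Fin.last _ :=
  rfl

theorem spiderLabelEquiv_some (heven : ∀ i, Even (ℓ i)) (i : Fin p) (j : Fin (ℓ i)) :
    (spiderLabelEquiv heven (some ⟨i, j⟩) : ℕ) =
      (spiderRank heven i j).rev + (∑ i, ℓ i / 2) * (j % 2) := by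
  simp [spiderLabelEquiv, spiderRank, Equiv.sigmaProdDistrib, finSuccEquivLast_symm_some,
    Fin.divNat, Fin.modNat, -finSigmaFinEquiv_apply]

theorem card_spider_vertices (heven : ∀ i, Even (ℓ i)) :
    Fintype.card (Option (Σ i : Fin p, Fin (ℓ i))) = 2 * ∑ i, ℓ i / 2 + 1 := by
  simpa using Fintype.card_congr (spiderLabelEquiv heven)

theorem diffValAtLeast_spiderLabelEquiv (heven : ∀ i, Even (ℓ i)) :
    DiffValAtLeast (spider p ℓ) (fun v => (spiderLabelEquiv heven v : ℕ) + 1) (∑ i, ℓ i / 2) := by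
  apply diffValAtLeast_fromRel
  rintro a b (⟨rfl, i, h, rfl⟩ | ⟨i, x, y, hxy, rfl, rfl⟩)
  · simp only [spiderLabelEquiv_none, spiderLabelEquiv_some, Fin.val_last, Fin.val_rev, Nat.dist]
    omega
  · have hrank := spiderRank_of_le heven i (j := x) (j' := y) (by omega)
    have hlt := (spiderRank heven i y).isLt
    simp only [spiderLabelEquiv_some, Fin.val_rev, Nat.dist]
    obtain hx | hx := Nat.mod_two_eq_zero_or_one x
    · rw [hx, show (y : ℕ) % 2 = 1 by omega]
      omega
    · rw [hx, show (y : ℕ) % 2 = 0 by omega]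
      omega

end Spider

/-- A spider graph with `p ≥ 1` attached paths, each having an even number of
vertices, admits a labeling of differential value at least `N_e`, and its
differential chromatic number equals `N_e`. -/
theorem stmt_8 (p : ℕ) (hp : 1 ≤ p) (ℓ : Fin p → ℕ) (hℓ : ∀ i, 1 ≤ ℓ i)
    (heven : ∀ i, Even (ℓ i)) :
    (∃ c : Option (Σ i : Fin p, Fin (ℓ i)) → ℕ, IsLabeling c ∧
      DiffValAtLeast (spider p ℓ) c (spiderNe p ℓ)) ∧
    diffChromNum (spider p ℓ) = spiderNe p ℓ := by
  have hc := isLabeling_of_equiv (spiderLabelEquiv heven)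
  have hd : DiffValAtLeast (spider p ℓ) (fun v => (spiderLabelEquiv heven v : ℕ) + 1)
      (spiderNe p ℓ) := by
    rw [spiderNe_eq_sum]; exact diffValAtLeast_spiderLabelEquiv heven
  have hcard : Fintype.card (Option (Σ i : Fin p, Fin (ℓ i))) / 2 = spiderNe p ℓ := by
    rw [card_spider_vertices heven, spiderNe_eq_sum]; omega
  refine ⟨⟨_, hc, hd⟩, ?_⟩
  rw [← hcard] at hd ⊢
  exact diffChromNum_eq_card_div_two (spider_exists_adj hp hℓ) hc hd
end

section
/- Let G be a spider graph with p ≥ 1 paths attached to the center in which every attached path has an odd number of vertices, and let N_e be the number of vertices of G at even positive level. Then there exists a labeling of G with differential value at least N_e + 1; consequently the differential chromatic number of G equals N_e + 1. -/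
/-!
Write `K = N_e`; since every path has odd length, the spider has `2K + p + 1` vertices. Apart from
the center and the `p` vertices at level one, each path splits into `⌊ℓ/2⌋` consecutive pairs
(levels `2t + 2` and `2t + 3`), `K` pairs in all.

Lower bound: label the level-one vertices `1, …, p`, the center `p + K + 1`, and, enumerating the
pairs path by path as `0, …, K - 1`, give the odd-level vertex of pair `r` the label `p + 1 + r`
and the even-level one `p + K + 2 + r`. Along a path the label then alternates between the two
blocks, jumping by `K + 1` or `K + 2`.

Upper bound: suppose a labeling has differential value `K + 2`. The `p` neighbours of the center
must avoid the `2K + 3` labels nearest to the center's, which leaves too few labels unless the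
center label is at most `K` or, symmetrically, at least `K + p + 2`; reflecting `c ↦ n + 1 - c`
reduces to the first case. Then the `K + 1` non-central vertices with labels at most `K + 2` are
pairwise non-adjacent and not at level one, so no two lie in the same pair: impossible.
-/

section Labeling

variable {V : Type*} {G : SimpleGraph V} {c : V → ℕ} {d : ℕ}

theorem DiffValAtLeast.mono_s9 {d' : ℕ} (hd : DiffValAtLeast G c d) (h : d' ≤ d) :
    DiffValAtLeast G c d' :=
  fun u v huv => h.trans (hd u v huv)

variable [Fintype V]

theorem IsLabeling.exists_eq (hc : IsLabeling c) {m : ℕ}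
    (hm : m ∈ Finset.Icc 1 (Fintype.card V)) : ∃ v, c v = m := by
  have hsurj : Finset.univ.image c = Finset.Icc 1 (Fintype.card V) := by
    refine Finset.eq_of_subset_of_card_le (fun _ hm => ?_) ?_
    · obtain ⟨v, -, rfl⟩ := Finset.mem_image.mp hm
      exact hc.2 v
    · rw [Finset.card_image_of_injective _ hc.1, Nat.card_Icc, Finset.card_univ]
      omega
  obtain ⟨v, -, hv⟩ := Finset.mem_image.mp (hsurj ▸ hm)
  exact ⟨v, hv⟩

theorem IsLabeling.reflect (hc : IsLabeling c) :
    IsLabeling (fun v => Fintype.card V + 1 - c v) := by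
  refine ⟨fun u v h => ?_, fun v => ?_⟩
  · have hu := Finset.mem_Icc.mp (hc.2 u)
    have hv := Finset.mem_Icc.mp (hc.2 v)
    exact hc.1 (by simp only at h; omega)
  · have hv := Finset.mem_Icc.mp (hc.2 v)
    simp only [Finset.mem_Icc]
    omega

theorem DiffValAtLeast.reflect (hc : IsLabeling c) (hd : DiffValAtLeast G c d) :
    DiffValAtLeast G (fun v => Fintype.card V + 1 - c v) d := by
  intro u v huv
  have hu := Finset.mem_Icc.mp (hc.2 u)
  have hv := Finset.mem_Icc.mp (hc.2 v)
  have := hd u v huv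
  simp only [Nat.dist] at this ⊢
  omega

theorem DiffValAtLeast.card_le_of_adj (hc : IsLabeling c) (hd : DiffValAtLeast G c d) {v : V}
    {ι : Type*} [Fintype ι] {f : ι → V} (hf : Function.Injective f) (hadj : ∀ i, G.Adj v (f i)) :
    Fintype.card ι ≤ (c v - d) + (Fintype.card V + 1 - (c v + d)) := by
  have hsub : Finset.univ.image (c ∘ f) ⊆
      Finset.Icc 1 (c v - d) ∪ Finset.Icc (c v + d) (Fintype.card V) := by
    intro m hm
    obtain ⟨i, -, rfl⟩ := Finset.mem_image.mp hm
    have hdist := hd _ _ (hadj i)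
    have hfi := Finset.mem_Icc.mp (hc.2 (f i))
    simp only [Nat.dist] at hdist
    simp only [Function.comp_apply, Finset.mem_union, Finset.mem_Icc]
    omega
  have := (Finset.card_le_card hsub).trans (Finset.card_union_le _ _)
  rwa [Finset.card_image_of_injective _ (hc.1.comp hf), Finset.card_univ, Nat.card_Icc,
    Nat.card_Icc] at this

theorem diffChromNum_eq_s9 (hlow : ∃ c, IsLabeling c ∧ DiffValAtLeast G c d)
    (hup : ∀ c, IsLabeling c → ¬ DiffValAtLeast G c (d + 1)) : diffChromNum G = d := by
  refine IsGreatest.csSup_eq ⟨hlow, ?_⟩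
  rintro d' ⟨c, hc, hd'⟩
  by_contra! h
  exact hup c hc (hd'.mono_s9 h)

end Labeling

theorem card_filter_fin_val_mod_two_eq_one (n : ℕ) :
    (Finset.univ.filter (fun j : Fin n => (j : ℕ) % 2 = 1)).card = n / 2 := by
  rw [← Finset.card_map Fin.valEmbedding, Finset.map_filter', Fin.map_valEmbedding_univ,
    Nat.Iio_eq_range, ← Nat.card_multiples n 2]
  congr 1
  ext b
  simp only [Finset.mem_filter, Finset.mem_range, Fin.valEmbedding_apply]
  constructor
  · rintro ⟨hb, a, ha, rfl⟩; omega
  · rintro ⟨hb, h⟩; exact ⟨hb, ⟨b, hb⟩, show b % 2 = 1 by omega, rfl⟩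

theorem Fin.sigma_ext {m : ℕ} {n : Fin m → ℕ} {u v : Σ i : Fin m, Fin (n i)}
    (h₁ : (u.1 : ℕ) = v.1) (h₂ : (u.2 : ℕ) = v.2) : u = v := by
  obtain ⟨i, j⟩ := u
  obtain ⟨i', j'⟩ := v
  obtain rfl := Fin.ext h₁
  obtain rfl := Fin.ext h₂
  rfl

namespace Spider

variable {p : ℕ} {ℓ : Fin p → ℕ}

theorem adj_center (i : Fin p) (h : 0 < ℓ i) : (spider p ℓ).Adj none (some ⟨i, ⟨0, h⟩⟩) :=
  (SimpleGraph.fromRel_adj _ _ _).mpr ⟨by simp, Or.inl (Or.inl ⟨rfl, i, h, rfl⟩)⟩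

theorem adj_of_succ {i : Fin p} {x y : Fin (ℓ i)} (h : (x : ℕ) + 1 = y) :
    (spider p ℓ).Adj (some ⟨i, x⟩) (some ⟨i, y⟩) := by
  refine (SimpleGraph.fromRel_adj _ _ _).mpr ⟨?_, Or.inl (Or.inr ⟨i, x, y, h, rfl, rfl⟩)⟩
  simp only [ne_eq, Option.some.injEq, Sigma.mk.injEq, heq_eq_eq, true_and]
  exact fun hxy => by omega

theorem diffValAtLeast_of_edges {c : Option (Σ i : Fin p, Fin (ℓ i)) → ℕ} {d : ℕ}
    (hcenter : ∀ i (h : 0 < ℓ i), d ≤ Nat.dist (c none) (c (some ⟨i, ⟨0, h⟩⟩)))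
    (hpath : ∀ i (x y : Fin (ℓ i)), (x : ℕ) + 1 = y →
      d ≤ Nat.dist (c (some ⟨i, x⟩)) (c (some ⟨i, y⟩))) :
    DiffValAtLeast (spider p ℓ) c d := by
  have hrel : ∀ a b, ((a = none ∧ ∃ (i : Fin p) (h : 0 < ℓ i), b = some ⟨i, ⟨0, h⟩⟩) ∨
      (∃ (i : Fin p) (x y : Fin (ℓ i)), (x : ℕ) + 1 = y ∧ a = some ⟨i, x⟩ ∧ b = some ⟨i, y⟩)) →
      d ≤ Nat.dist (c a) (c b) := by
    rintro a b (⟨rfl, i, h, rfl⟩ | ⟨i, x, y, hxy, rfl, rfl⟩)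
    exacts [hcenter i h, hpath i x y hxy]
  intro u v huv
  obtain ⟨-, h | h⟩ := (SimpleGraph.fromRel_adj _ _ _).mp huv
  exacts [hrel u v h, Nat.dist_comm (c u) (c v) ▸ hrel v u h]

theorem spiderNe_eq_sum : spiderNe p ℓ = ∑ i, ℓ i / 2 := by
  have h : Finset.univ.filter (fun v : Σ i : Fin p, Fin (ℓ i) => (v.2 : ℕ) % 2 = 1) =
      Finset.univ.sigma fun i => Finset.univ.filter fun j : Fin (ℓ i) => (j : ℕ) % 2 = 1 := by
    ext; simp
  simp only [spiderNe, h, Finset.card_sigma, card_filter_fin_val_mod_two_eq_one]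

theorem card_vertices (hodd : ∀ i, Odd (ℓ i)) :
    Fintype.card (Option (Σ i : Fin p, Fin (ℓ i))) = 2 * spiderNe p ℓ + p + 1 := by
  have hℓ : ∀ i ∈ Finset.univ, ℓ i = 2 * (ℓ i / 2) + 1 := fun i _ => by
    have := Nat.odd_iff.mp (hodd i); omega
  rw [Fintype.card_option, Fintype.card_sigma, spiderNe_eq_sum, Finset.mul_sum]
  simp only [Fintype.card_fin]
  rw [Finset.sum_congr rfl hℓ, Finset.sum_add_distrib]
  simp

variable (ℓ) in
/-- Vertices `j = 2t + 1` and `j = 2t + 2` of path `i` (levels `2t + 2`, `2t + 3`) form its `t`-th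
pair, and the pairs are numbered `0, …, K - 1` path by path. The value `0` at `j = 0` is junk. -/
def pairRank (v : Σ i : Fin p, Fin (ℓ i)) : ℕ :=
  if hv : (v.2 : ℕ) = 0 then 0
  else finSigmaFinEquiv
    (⟨v.1, ⟨((v.2 : ℕ) - 1) / 2, by have := v.2.isLt; omega⟩⟩ : Σ i, Fin (ℓ i / 2))

theorem pairRank_lt {v : Σ i : Fin p, Fin (ℓ i)} (hv : (v.2 : ℕ) ≠ 0) :
    pairRank ℓ v < spiderNe p ℓ := by
  rw [pairRank, dif_neg hv, spiderNe_eq_sum]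
  exact Fin.isLt _

theorem pairRank_mk_add {i : Fin p} {x y : Fin (ℓ i)} (hx : (x : ℕ) ≠ 0) (hy : (y : ℕ) ≠ 0) :
    pairRank ℓ ⟨i, x⟩ + ((y : ℕ) - 1) / 2 = pairRank ℓ ⟨i, y⟩ + ((x : ℕ) - 1) / 2 := by
  simp only [pairRank, dif_neg hx, dif_neg hy, finSigmaFinEquiv_apply]
  omega

theorem fst_eq_and_half_eq_of_pairRank_eq {u v : Σ i : Fin p, Fin (ℓ i)} (hu : (u.2 : ℕ) ≠ 0)
    (hv : (v.2 : ℕ) ≠ 0) (h : pairRank ℓ u = pairRank ℓ v) :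
    u.1 = v.1 ∧ ((u.2 : ℕ) - 1) / 2 = ((v.2 : ℕ) - 1) / 2 := by
  rw [pairRank, pairRank, dif_neg hu, dif_neg hv] at h
  have hpair := finSigmaFinEquiv.injective (Fin.ext h)
  simp only [Sigma.mk.inj_iff] at hpair
  obtain ⟨h₁, h₂⟩ := hpair
  refine ⟨h₁, ?_⟩
  obtain ⟨i, j⟩ := u
  obtain ⟨i', j'⟩ := v
  obtain rfl : i = i' := h₁
  simpa using h₂

variable (p ℓ) in
def label : Option (Σ i : Fin p, Fin (ℓ i)) → ℕ
  | none => p + spiderNe p ℓ + 1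
  | some v =>
    if (v.2 : ℕ) = 0 then v.1 + 1
    else if (v.2 : ℕ) % 2 = 0 then p + 1 + pairRank ℓ v
    else p + spiderNe p ℓ + 2 + pairRank ℓ v

theorem label_isLabeling (hodd : ∀ i, Odd (ℓ i)) : IsLabeling (label p ℓ) := by
  refine ⟨?_, ?_⟩
  · rintro (_ | u) (_ | v) h
    · rfl
    · have hv : (v.2 : ℕ) ≠ 0 → pairRank ℓ v < spiderNe p ℓ := pairRank_lt
      have := v.1.isLt
      simp only [label] at h
      split_ifs at h <;> omega
    · have hu : (u.2 : ℕ) ≠ 0 → pairRank ℓ u < spiderNe p ℓ := pairRank_lt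
      have := u.1.isLt
      simp only [label] at h
      split_ifs at h <;> omega
    · have hu : (u.2 : ℕ) ≠ 0 → pairRank ℓ u < spiderNe p ℓ := pairRank_lt
      have hv : (v.2 : ℕ) ≠ 0 → pairRank ℓ v < spiderNe p ℓ := pairRank_lt
      have := u.1.isLt
      have := v.1.isLt
      simp only [label, Option.some.injEq] at h ⊢
      split_ifs at h with hu0 hu2 hv0 hv2 hv0 hv2 hv0 hv2
      · exact Fin.sigma_ext (by omega) (by omega)
      all_goals first
        | omega
        | (obtain ⟨h₁, h₂⟩ := fst_eq_and_half_eq_of_pairRank_eq hu0 hv0 (by omega)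
           exact Fin.sigma_ext (congrArg Fin.val h₁) (by omega))
  · rintro (_ | v)
    all_goals
      rw [card_vertices hodd, Finset.mem_Icc]
    · simp only [label]; omega
    · have hv : (v.2 : ℕ) ≠ 0 → pairRank ℓ v < spiderNe p ℓ := pairRank_lt
      have := v.1.isLt
      simp only [label]
      split_ifs <;> omega

theorem diffValAtLeast_label : DiffValAtLeast (spider p ℓ) (label p ℓ) (spiderNe p ℓ + 1) := by
  refine diffValAtLeast_of_edges (fun i h => ?_) (fun i x y hxy => ?_)
  · simp only [label, Nat.dist, ↓reduceIte]; have := i.isLt; omega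
  · have hrank : (x : ℕ) ≠ 0 →
        pairRank ℓ ⟨i, x⟩ + ((y : ℕ) - 1) / 2 = pairRank ℓ ⟨i, y⟩ + ((x : ℕ) - 1) / 2 :=
      fun hx => pairRank_mk_add hx (by omega)
    have := i.isLt
    simp only [label, Nat.dist]
    split_ifs <;> omega

theorem card_le_spiderNe_of_forall_not_adj {s : Finset (Σ i : Fin p, Fin (ℓ i))}
    (hs : ∀ v ∈ s, (v.2 : ℕ) ≠ 0)
    (hind : ∀ u ∈ s, ∀ v ∈ s, ¬ (spider p ℓ).Adj (some u) (some v)) : s.card ≤ spiderNe p ℓ := by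
  have hmaps : ∀ v ∈ s, pairRank ℓ v ∈ Finset.range (spiderNe p ℓ) :=
    fun v hv => Finset.mem_range.mpr (pairRank_lt (hs v hv))
  have hinj : Set.InjOn (pairRank ℓ) s := by
    intro u hu v hv h
    obtain ⟨h₁, h₂⟩ := fst_eq_and_half_eq_of_pairRank_eq (hs u hu) (hs v hv) h
    obtain ⟨i, x⟩ := u
    obtain ⟨i', y⟩ := v
    obtain rfl : i = i' := h₁
    have hx := hs _ hu
    have hy := hs _ hv
    simp only at h₂ hx hy
    rcases lt_trichotomy (x : ℕ) y with hxy | hxy | hxy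
    · exact absurd (adj_of_succ (by omega)) (hind _ hu _ hv)
    · exact Fin.sigma_ext rfl hxy
    · exact absurd (adj_of_succ (by omega)) (hind _ hv _ hu)
  simpa using Finset.card_le_card_of_injOn _ hmaps hinj

theorem center_label_le_or_le (hp : 1 ≤ p) (hodd : ∀ i, Odd (ℓ i))
    {c : Option (Σ i : Fin p, Fin (ℓ i)) → ℕ} (hc : IsLabeling c)
    (hd : DiffValAtLeast (spider p ℓ) c (spiderNe p ℓ + 2)) :
    c none ≤ spiderNe p ℓ ∨ spiderNe p ℓ + p + 2 ≤ c none := by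
  have hinj : Function.Injective fun i : Fin p =>
      (some ⟨i, ⟨0, (hodd i).pos⟩⟩ : Option (Σ i : Fin p, Fin (ℓ i))) := by
    intro i i' h
    simp only [Option.some.injEq, Sigma.mk.injEq] at h
    exact h.1
  have := hd.card_le_of_adj hc hinj fun i => adj_center i (hodd i).pos
  have hx := Finset.mem_Icc.mp (hc.2 none)
  rw [Fintype.card_fin, card_vertices hodd] at this
  rw [card_vertices hodd] at hx
  omega

theorem false_of_center_label_le (hodd : ∀ i, Odd (ℓ i))
    {c : Option (Σ i : Fin p, Fin (ℓ i)) → ℕ} (hc : IsLabeling c)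
    (hd : DiffValAtLeast (spider p ℓ) c (spiderNe p ℓ + 2)) (hx : c none ≤ spiderNe p ℓ) :
    False := by
  set s := Finset.univ.filter fun v => c (some v) ≤ spiderNe p ℓ + 2
  have hx₁ := (Finset.mem_Icc.mp (hc.2 none)).1
  have hlabels : Finset.Icc 1 (spiderNe p ℓ + 2) ⊆ insert (c none) (s.image (c ∘ some)) := by
    intro m hm
    have hmn : m ∈ Finset.Icc 1 (Fintype.card (Option (Σ i : Fin p, Fin (ℓ i)))) := by
      rw [card_vertices hodd]; simp only [Finset.mem_Icc] at hm ⊢; omega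
    obtain ⟨_ | v, rfl⟩ := hc.exists_eq hmn
    · exact Finset.mem_insert_self _ _
    · refine Finset.mem_insert_of_mem (Finset.mem_image.mpr ⟨v, ?_, rfl⟩)
      exact Finset.mem_filter.mpr ⟨Finset.mem_univ _, (Finset.mem_Icc.mp hm).2⟩
  have hcard : spiderNe p ℓ + 1 ≤ s.card := by
    have := (Finset.card_le_card hlabels).trans (Finset.card_insert_le _ _)
    rw [Nat.card_Icc] at this
    have := s.card_image_le (f := c ∘ some)
    omega
  have hlabel₁ : ∀ v, 1 ≤ c v := fun v => (Finset.mem_Icc.mp (hc.2 v)).1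
  have hs_ne : ∀ v ∈ s, (v.2 : ℕ) ≠ 0 := by
    rintro ⟨i, j⟩ hv hj
    obtain rfl : j = ⟨0, (hodd i).pos⟩ := Fin.ext hj
    have hdist := hd _ _ (adj_center i (hodd i).pos)
    have := hlabel₁ (some ⟨i, ⟨0, (hodd i).pos⟩⟩)
    simp only [s, Finset.mem_filter, Finset.mem_univ, true_and, Nat.dist] at hv hdist
    omega
  have hs_ind : ∀ u ∈ s, ∀ v ∈ s, ¬ (spider p ℓ).Adj (some u) (some v) := by
    intro u hu v hv huv
    have hdist := hd _ _ huv
    have := hlabel₁ (some u)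
    have := hlabel₁ (some v)
    simp only [s, Finset.mem_filter, Finset.mem_univ, true_and, Nat.dist] at hu hv hdist
    omega
  have := card_le_spiderNe_of_forall_not_adj hs_ne hs_ind
  omega

theorem not_diffValAtLeast_add_two (hp : 1 ≤ p) (hodd : ∀ i, Odd (ℓ i))
    {c : Option (Σ i : Fin p, Fin (ℓ i)) → ℕ} (hc : IsLabeling c) :
    ¬ DiffValAtLeast (spider p ℓ) c (spiderNe p ℓ + 2) := by
  intro hd
  rcases center_label_le_or_le hp hodd hc hd with hx | hx
  · exact false_of_center_label_le hodd hc hd hx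
  · refine false_of_center_label_le hodd hc.reflect (hd.reflect hc) ?_
    have := (Finset.mem_Icc.mp (hc.2 none)).2
    rw [card_vertices hodd] at this ⊢
    omega

end Spider

theorem stmt_9_general (p : ℕ) (hp : 1 ≤ p) (ℓ : Fin p → ℕ)
    (hodd : ∀ i, Odd (ℓ i)) :
    (∃ c : Option (Σ i : Fin p, Fin (ℓ i)) → ℕ, IsLabeling c ∧
      DiffValAtLeast (spider p ℓ) c (spiderNe p ℓ + 1)) ∧
    diffChromNum (spider p ℓ) = spiderNe p ℓ + 1 := by
  have hlabel : ∃ c, IsLabeling c ∧ DiffValAtLeast (spider p ℓ) c (spiderNe p ℓ + 1) :=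
    ⟨Spider.label p ℓ, Spider.label_isLabeling hodd, Spider.diffValAtLeast_label⟩
  exact ⟨hlabel, diffChromNum_eq_s9 hlabel fun _ hc => Spider.not_diffValAtLeast_add_two hp hodd hc⟩

/-- A spider graph with `p ≥ 1` attached paths, each having an odd number of
vertices, admits a labeling of differential value at least `N_e + 1`, and its
differential chromatic number equals `N_e + 1`. -/
theorem stmt_9 (p : ℕ) (hp : 1 ≤ p) (ℓ : Fin p → ℕ) (hℓ : ∀ i, 1 ≤ ℓ i)
    (hodd : ∀ i, Odd (ℓ i)) :
    (∃ c : Option (Σ i : Fin p, Fin (ℓ i)) → ℕ, IsLabeling c ∧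
      DiffValAtLeast (spider p ℓ) c (spiderNe p ℓ + 1)) ∧
    diffChromNum (spider p ℓ) = spiderNe p ℓ + 1 :=
  stmt_9_general p hp ℓ hodd
end

section
/- Let G be a caterpillar with n vertices in which every spine vertex has at least one leg, and let Δ be the maximum number of legs of any spine vertex. Then there exists a labeling of G with differential value at least n/2 − Δ − 1. -/
/-- The caterpillar with spine vertices `⟨i, none⟩` for `i : Fin s` forming a path,
where spine vertex `⟨i, none⟩` is adjacent to its `ℓ i` legs `⟨i, some j⟩`. -/
def caterpillar (s : ℕ) (ℓ : Fin s → ℕ) :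
    SimpleGraph (Σ i : Fin s, Option (Fin (ℓ i))) :=
  SimpleGraph.fromRel (fun a b =>
    (a.2 = none ∧ b.2 = none ∧ (a.1 : ℕ) + 1 = (b.1 : ℕ)) ∨
    (a.1 = b.1 ∧ a.2 = none ∧ b.2 ≠ none))


/-!
Choose a pivot spine `p` and colour the other spines low/high, alternately along the spine path
with `p` removed, so that `p - 1` is low and `p + 1` is high. Label in this order: the low spines,
the legs of the high spines, `p`, the legs of the low spines, the high spines, the legs of `p`.
Listing spines and legs inside a block in the same order, with `p - 1` first among the low spines
and `p + 1` last among the high spines, every edge spans at least `min (F p) (G p)` labels, where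
`F p = #low + legs(high)` and `G p = #high + legs(low)` (`lowerWeight` and `upperWeight`).

It remains to choose `p`. Since `F p + G p = n - 1 - ℓ p` and `F (p + 1) = G p`, any two
consecutive terms of `F 0, G 0, G 1, …, G (s - 1)` sum to at least `n - 1 - Δ`, so if no two
consecutive terms are `≥ n/2 - Δ - 1`, the small terms are exactly those of one parity. But at an
end of the spine all other spines lie on one side of the pivot, so up to `Δ` the end terms are
parity weights `#(spines of one parity) + legs(spines of the other)`; two end terms of equal index
parity get complementary parity weights, which sum to `n`, so they cannot both be small.
-/

open Finset

theorem sum_range_add_lt_sum_range {size : ℕ → ℕ} {b c x : ℕ} (hx : x < size b) (hbc : b < c) :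
    ∑ k ∈ range b, size k + x < ∑ k ∈ range c, size k :=
  calc ∑ k ∈ range b, size k + x < ∑ k ∈ range (b + 1), size k := by
        rw [sum_range_succ]; omega
    _ ≤ ∑ k ∈ range c, size k := sum_le_sum_of_subset (range_subset_range.2 hbc)

theorem eq_and_eq_of_sum_range_add_eq {size : ℕ → ℕ} {b c x y : ℕ} (hx : x < size b)
    (hy : y < size c) (h : ∑ k ∈ range b, size k + x = ∑ k ∈ range c, size k + y) :
    b = c ∧ x = y := by
  rcases lt_trichotomy b c with hbc | rfl | hbc
  · have := sum_range_add_lt_sum_range hx hbc; omega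
  · omega
  · have := sum_range_add_lt_sum_range hy hbc; omega

section WeightBelow

variable {ι α : Type*} [LinearOrder α]

def weightBelow (T : Finset ι) (key : ι → α) (w : ι → ℕ) (i : ι) : ℕ :=
  ∑ j ∈ T with key j < key i, w j

def weightAbove (T : Finset ι) (key : ι → α) (w : ι → ℕ) (i : ι) : ℕ :=
  ∑ j ∈ T with key i < key j, w j

variable {T : Finset ι} {key : ι → α} {w : ι → ℕ} {i j : ι}

theorem weightBelow_add_le_weightBelow (hi : i ∈ T) (hij : key i < key j) :
    weightBelow T key w i + w i ≤ weightBelow T key w j := by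
  classical
  rw [weightBelow, add_comm, ← sum_insert (by simp)]
  refine sum_le_sum_of_subset fun k hk => ?_
  simp only [mem_insert, mem_filter] at hk ⊢
  rcases hk with rfl | ⟨hk, hlt⟩
  exacts [⟨hi, hij⟩, ⟨hk, hlt.trans hij⟩]

theorem weightBelow_add_add_weightAbove (hkey : Set.InjOn key T) (hi : i ∈ T) :
    weightBelow T key w i + w i + weightAbove T key w i = ∑ j ∈ T, w j := by
  classical
  have hsplit : {j ∈ T | ¬key j < key i} = insert i {j ∈ T | key i < key j} := by
    ext j
    simp only [mem_filter, mem_insert, not_lt]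
    constructor
    · rintro ⟨hj, hle⟩
      rcases hle.lt_or_eq with h | h
      exacts [Or.inr ⟨hj, h⟩, Or.inl (hkey hj hi h.symm)]
    · rintro (rfl | ⟨hj, h⟩)
      exacts [⟨hi, le_rfl⟩, ⟨hj, h.le⟩]
  rw [weightBelow, weightAbove, add_assoc, ← sum_insert (by simp), ← hsplit,
    sum_filter_add_sum_filter_not]

theorem weightBelow_add_lt_sum (hkey : Set.InjOn key T) (hi : i ∈ T) {x : ℕ} (hx : x < w i) :
    weightBelow T key w i + x < ∑ j ∈ T, w j := by
  have := weightBelow_add_add_weightAbove (w := w) hkey hi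
  omega

theorem eq_of_weightBelow_add_eq (hkey : Set.InjOn key T) (hi : i ∈ T) (hj : j ∈ T) {x y : ℕ}
    (hx : x < w i) (hy : y < w j) (h : weightBelow T key w i + x = weightBelow T key w j + y) :
    i = j := by
  rcases lt_trichotomy (key i) (key j) with hlt | heq | hlt
  · have := weightBelow_add_le_weightBelow (w := w) hi hlt; omega
  · exact hkey hi hj heq
  · have := weightBelow_add_le_weightBelow (w := w) hj hlt; omega

theorem weightBelow_mono {v : ι → ℕ} (h : v ≤ w) :
    weightBelow T key v i ≤ weightBelow T key w i :=
  sum_le_sum fun j _ => h j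

theorem weightAbove_mono {v : ι → ℕ} (h : v ≤ w) :
    weightAbove T key v i ≤ weightAbove T key w i :=
  sum_le_sum fun j _ => h j

end WeightBelow

theorem exists_consecutive_large {u : ℕ → ℕ} {s n Δ : ℕ} (hs : 1 ≤ s)
    (hstep : ∀ q < s, n ≤ u q + u (q + 1) + Δ + 1)
    (hends : ∀ a b, a ≤ 1 → s ≤ b + 1 → b ≤ s → a % 2 = b % 2 → n ≤ u a + u b + 2 * Δ) :
    ∃ q < s, n ≤ 2 * u q + 2 * Δ + 2 ∧ n ≤ 2 * u (q + 1) + 2 * Δ + 2 := by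
  by_contra! hbad
  have alternate : ∀ q ≤ s,
      (2 * u q + 2 * Δ + 2 < n ↔ (2 * u 0 + 2 * Δ + 2 < n ↔ q % 2 = 0)) := by
    intro q
    induction q with
    | zero => simp
    | succ q ih =>
      intro hq
      have := ih (by omega); have := hbad q (by omega); have := hstep q (by omega)
      omega
  obtain ⟨a, ha, hsmall⟩ : ∃ a ≤ 1, 2 * u a + 2 * Δ + 2 < n := by
    by_cases h₀ : 2 * u 0 + 2 * Δ + 2 < n
    · exact ⟨0, zero_le_one, h₀⟩
    · exact ⟨1, le_rfl, hbad 0 hs (by omega)⟩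
  obtain ⟨b, hb₁, hb₂, hab⟩ : ∃ b, s ≤ b + 1 ∧ b ≤ s ∧ a % 2 = b % 2 :=
    ⟨s - (s + a) % 2, by omega, by omega, by omega⟩
  have := alternate a (by omega)
  have := alternate b hb₂
  have := hends a b ha hb₁ hb₂ hab
  omega

namespace Caterpillar

variable {s : ℕ}

section Spines

/-- The proper 2-colouring of the spine path with the pivot `p` removed in which `p - 1` is low
and `p + 1` is high. -/
def lowSpines (s p : ℕ) : Finset (Fin s) :=
  {i | (i : ℕ) ≠ p ∧ ((i : ℕ) < p ↔ (i + p) % 2 = 1)}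

def highSpines (s p : ℕ) : Finset (Fin s) :=
  {i | (i : ℕ) ≠ p ∧ ((i : ℕ) < p ↔ (i + p) % 2 = 0)}

-- Low spines are listed by increasing and high spines by decreasing distance from the pivot, so
-- that `p - 1` comes first and `p + 1` last.
def lowKey (p : ℕ) (i : Fin s) : ℕ := Nat.dist i p

def highKey (p : ℕ) (i : Fin s) : ℕᵒᵈ := OrderDual.toDual (Nat.dist i p)

variable {p : ℕ} {i : Fin s}

theorem mem_lowSpines :
    i ∈ lowSpines s p ↔ (i : ℕ) ≠ p ∧ ((i : ℕ) < p ↔ (i + p) % 2 = 1) := by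
  simp [lowSpines]

theorem mem_highSpines :
    i ∈ highSpines s p ↔ (i : ℕ) ≠ p ∧ ((i : ℕ) < p ↔ (i + p) % 2 = 0) := by
  simp [highSpines]

theorem notMem_lowSpines_of_mem_highSpines (h : i ∈ highSpines s p) : i ∉ lowSpines s p := by
  rw [mem_highSpines] at h; rw [mem_lowSpines]; omega

theorem highSpines_succ : highSpines s (p + 1) = lowSpines s p := by
  ext i; rw [mem_lowSpines, mem_highSpines]; omega

theorem lowKey_injOn : Set.InjOn (lowKey p) (lowSpines s p : Set (Fin s)) := by
  intro i hi j hj h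
  simp only [lowKey, Nat.dist, mem_coe, mem_lowSpines] at hi hj h
  omega

theorem highKey_injOn : Set.InjOn (highKey p) (highSpines s p : Set (Fin s)) := by
  intro i hi j hj h
  simp only [highKey, Nat.dist, OrderDual.toDual_inj, mem_coe, mem_highSpines] at hi hj h
  omega

theorem weightBelow_lowKey_eq_zero (hi : (i : ℕ) + 1 = p) (w : Fin s → ℕ) :
    weightBelow (lowSpines s p) (lowKey p) w i = 0 := by
  refine sum_eq_zero fun j hj => absurd hj ?_
  rw [mem_filter, mem_lowSpines, lowKey, lowKey, Nat.dist, Nat.dist]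
  omega

theorem weightAbove_highKey_eq_zero (hi : (i : ℕ) = p + 1) (w : Fin s → ℕ) :
    weightAbove (highSpines s p) (highKey p) w i = 0 := by
  refine sum_eq_zero fun j hj => absurd hj ?_
  simp only [mem_filter, mem_highSpines, highKey, OrderDual.toDual_lt_toDual, Nat.dist]
  omega

end Spines

def lowerWeight (ℓ : Fin s → ℕ) (p : ℕ) : ℕ := #(lowSpines s p) + ∑ i ∈ highSpines s p, ℓ i

def upperWeight (ℓ : Fin s → ℕ) (p : ℕ) : ℕ := #(highSpines s p) + ∑ i ∈ lowSpines s p, ℓ i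

section Labeling

variable (ℓ : Fin s → ℕ) (p : Fin s)

def blockSize : ℕ → ℕ
  | 0 => #(lowSpines s p)
  | 1 => ∑ i ∈ highSpines s p, ℓ i
  | 2 => 1
  | 3 => ∑ i ∈ lowSpines s p, ℓ i
  | 4 => #(highSpines s p)
  | 5 => ℓ p
  | _ => 0

/-- `place ℓ p v = (b, x)` means that `v` is preceded by `x` vertices of block `b`; the blocks, in
label order, are the low spines, the legs of the high spines, the pivot, the legs of the low
spines, the high spines and the legs of the pivot. -/
def place : (Σ i : Fin s, Option (Fin (ℓ i))) → ℕ × ℕ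
  | ⟨i, none⟩ =>
    if i = p then (2, 0)
    else if i ∈ lowSpines s p then (0, weightBelow (lowSpines s p) (lowKey p) 1 i)
    else (4, weightBelow (highSpines s p) (highKey p) 1 i)
  | ⟨i, some q⟩ =>
    if i = p then (5, q)
    else if i ∈ lowSpines s p then (3, weightBelow (lowSpines s p) (lowKey p) ℓ i + q)
    else (1, weightBelow (highSpines s p) (highKey p) ℓ i + q)

def label (v : Σ i : Fin s, Option (Fin (ℓ i))) : ℕ :=
  ∑ k ∈ range (place ℓ p v).1, blockSize ℓ p k + (place ℓ p v).2 + 1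

variable {ℓ p} {i : Fin s}

theorem ne_of_mem_lowSpines (h : i ∈ lowSpines s p) : i ≠ p :=
  fun hi => (mem_lowSpines.1 h).1 (congrArg Fin.val hi)

theorem ne_of_mem_highSpines (h : i ∈ highSpines s p) : i ≠ p :=
  fun hi => (mem_highSpines.1 h).1 (congrArg Fin.val hi)

theorem eq_or_mem_lowSpines_or_mem_highSpines (p i : Fin s) :
    i = p ∨ i ∈ lowSpines s p ∨ i ∈ highSpines s p := by
  rw [mem_lowSpines, mem_highSpines, Fin.ext_iff]; omega

theorem place_pivot : place ℓ p ⟨p, none⟩ = (2, 0) := by simp [place]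

theorem place_low_spine (hi : i ∈ lowSpines s p) :
    place ℓ p ⟨i, none⟩ = (0, weightBelow (lowSpines s p) (lowKey p) 1 i) := by
  simp [place, ne_of_mem_lowSpines hi, hi]

theorem place_high_spine (hi : i ∈ highSpines s p) :
    place ℓ p ⟨i, none⟩ = (4, weightBelow (highSpines s p) (highKey p) 1 i) := by
  simp [place, ne_of_mem_highSpines hi, notMem_lowSpines_of_mem_highSpines hi]

theorem place_pivot_leg (q : Fin (ℓ p)) : place ℓ p ⟨p, some q⟩ = (5, (q : ℕ)) := by
  simp [place]

theorem place_low_leg (hi : i ∈ lowSpines s p) (q : Fin (ℓ i)) :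
    place ℓ p ⟨i, some q⟩ = (3, weightBelow (lowSpines s p) (lowKey p) ℓ i + q) := by
  simp [place, ne_of_mem_lowSpines hi, hi]

theorem place_high_leg (hi : i ∈ highSpines s p) (q : Fin (ℓ i)) :
    place ℓ p ⟨i, some q⟩ = (1, weightBelow (highSpines s p) (highKey p) ℓ i + q) := by
  simp [place, ne_of_mem_highSpines hi, notMem_lowSpines_of_mem_highSpines hi]

theorem place_snd_lt (v : Σ i : Fin s, Option (Fin (ℓ i))) :
    (place ℓ p v).2 < blockSize ℓ p (place ℓ p v).1 := by
  obtain ⟨i, _ | q⟩ := v <;>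
    rcases eq_or_mem_lowSpines_or_mem_highSpines p i with rfl | hi | hi
  · simp [place_pivot, blockSize]
  · simpa [place_low_spine hi, blockSize] using
      weightBelow_add_lt_sum (w := 1) lowKey_injOn hi zero_lt_one
  · simpa [place_high_spine hi, blockSize] using
      weightBelow_add_lt_sum (w := 1) highKey_injOn hi zero_lt_one
  · simp [place_pivot_leg, blockSize]
  · rw [place_low_leg hi]; exact weightBelow_add_lt_sum lowKey_injOn hi q.isLt
  · rw [place_high_leg hi]; exact weightBelow_add_lt_sum highKey_injOn hi q.isLt

theorem place_fst_lt (v : Σ i : Fin s, Option (Fin (ℓ i))) : (place ℓ p v).1 < 6 := by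
  obtain ⟨i, _ | q⟩ := v <;> simp only [place] <;> split_ifs <;> norm_num

theorem place_injective : Function.Injective (place ℓ p) := by
  rintro ⟨i, _ | x⟩ ⟨j, _ | y⟩ h <;>
    have hi := eq_or_mem_lowSpines_or_mem_highSpines p i <;>
    have hj := eq_or_mem_lowSpines_or_mem_highSpines p j <;>
    rcases hi with rfl | hi | hi <;> rcases hj with rfl | hj | hj <;>
    simp (disch := assumption) only [place_pivot, place_low_spine, place_high_spine,
      place_pivot_leg, place_low_leg, place_high_leg, Prod.mk.injEq] at h <;>
    norm_num at h
  -- vertices of different blocks are told apart by the block index; the six blocks remain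
  · rfl
  · rw [eq_of_weightBelow_add_eq (x := 0) (y := 0) lowKey_injOn hi hj zero_lt_one zero_lt_one h]
  · rw [eq_of_weightBelow_add_eq (x := 0) (y := 0) highKey_injOn hi hj zero_lt_one zero_lt_one h]
  · rw [Fin.ext h]
  · obtain rfl := eq_of_weightBelow_add_eq lowKey_injOn hi hj x.isLt y.isLt h
    rw [Fin.ext (by omega : (x : ℕ) = y)]
  · obtain rfl := eq_of_weightBelow_add_eq highKey_injOn hi hj x.isLt y.isLt h
    rw [Fin.ext (by omega : (x : ℕ) = y)]

variable (p) in
theorem sum_lowSpines_add_sum_highSpines (f : Fin s → ℕ) :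
    ∑ i ∈ lowSpines s p, f i + ∑ i ∈ highSpines s p, f i + f p = ∑ i, f i := by
  have hunion : lowSpines s p ∪ highSpines s p = univ.erase p := by
    ext i
    simp only [mem_union, mem_lowSpines, mem_highSpines, mem_erase, mem_univ, and_true, ne_eq,
      Fin.ext_iff]
    omega
  have hdisj : Disjoint (lowSpines s p) (highSpines s p) :=
    disjoint_left.2 fun _ hi hj => notMem_lowSpines_of_mem_highSpines hj hi
  rw [← sum_union hdisj, hunion, sum_erase_add _ _ (mem_univ p)]

variable (p) in
theorem card_lowSpines_add_card_highSpines : #(lowSpines s p) + #(highSpines s p) + 1 = s := by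
  simpa using sum_lowSpines_add_sum_highSpines p 1

variable (ℓ p) in
theorem lowerWeight_add_upperWeight :
    lowerWeight ℓ p + upperWeight ℓ p + ℓ p + 1 = s + ∑ i, ℓ i := by
  have := card_lowSpines_add_card_highSpines p
  have := sum_lowSpines_add_sum_highSpines p ℓ
  unfold lowerWeight upperWeight
  omega

variable (ℓ) in
theorem card_vertices : Fintype.card (Σ i : Fin s, Option (Fin (ℓ i))) = s + ∑ i, ℓ i := by
  simp [Fintype.card_sigma, sum_add_distrib, add_comm]

theorem isLabeling_label : IsLabeling (label ℓ p) := by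
  have hsize : ∑ k ∈ range 6, blockSize ℓ p k = s + ∑ i, ℓ i := by
    have := lowerWeight_add_upperWeight ℓ p
    simp only [sum_range_succ, range_zero, sum_empty, blockSize]
    unfold lowerWeight upperWeight at this
    omega
  refine ⟨fun u v h => place_injective <| Prod.ext_iff.2 <|
    eq_and_eq_of_sum_range_add_eq (place_snd_lt u) (place_snd_lt v) (Nat.succ_injective h),
    fun v => mem_Icc.2 ⟨Nat.le_add_left _ _, ?_⟩⟩
  rw [card_vertices, ← hsize]
  exact sum_range_add_lt_sum_range (place_snd_lt v) (place_fst_lt v)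

theorem label_pivot : label ℓ p ⟨p, none⟩ = lowerWeight ℓ p + 1 := by
  simp [label, place_pivot, sum_range_succ, blockSize, lowerWeight]

theorem label_low_spine (hi : i ∈ lowSpines s p) :
    label ℓ p ⟨i, none⟩ = weightBelow (lowSpines s p) (lowKey p) 1 i + 1 := by
  simp [label, place_low_spine hi]

theorem label_high_spine (hi : i ∈ highSpines s p) :
    label ℓ p ⟨i, none⟩ = lowerWeight ℓ p + ∑ j ∈ lowSpines s p, ℓ j +
      weightBelow (highSpines s p) (highKey p) 1 i + 2 := by
  simp [label, place_high_spine hi, sum_range_succ, blockSize, lowerWeight]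
  omega

theorem label_pivot_leg (q : Fin (ℓ p)) :
    label ℓ p ⟨p, some q⟩ = lowerWeight ℓ p + upperWeight ℓ p + q + 2 := by
  simp [label, place_pivot_leg, sum_range_succ, blockSize, lowerWeight, upperWeight]
  omega

theorem label_low_leg (hi : i ∈ lowSpines s p) (q : Fin (ℓ i)) :
    label ℓ p ⟨i, some q⟩ =
      lowerWeight ℓ p + weightBelow (lowSpines s p) (lowKey p) ℓ i + q + 2 := by
  simp [label, place_low_leg hi, sum_range_succ, blockSize, lowerWeight]
  omega

theorem label_high_leg (hi : i ∈ highSpines s p) (q : Fin (ℓ i)) :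
    label ℓ p ⟨i, some q⟩ =
      #(lowSpines s p) + weightBelow (highSpines s p) (highKey p) ℓ i + q + 1 := by
  simp [label, place_high_leg hi, blockSize, add_assoc]

variable (hℓ : ∀ i, 1 ≤ ℓ i)
include hℓ

theorem card_le_sum_of_one_le (T : Finset (Fin s)) : #T ≤ ∑ i ∈ T, ℓ i :=
  (card_eq_sum_ones T).trans_le (sum_le_sum fun i _ => hℓ i)

theorem min_le_dist_label_low_high {j : Fin s} (hi : i ∈ lowSpines s p)
    (hj : j ∈ highSpines s p) :
    min (lowerWeight ℓ p) (upperWeight ℓ p) ≤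
      Nat.dist (label ℓ p ⟨i, none⟩) (label ℓ p ⟨j, none⟩) := by
  have := card_le_sum_of_one_le hℓ (highSpines s p)
  have := weightBelow_add_lt_sum (w := 1) lowKey_injOn hi zero_lt_one
  simp only [Pi.one_apply, ← card_eq_sum_ones] at this
  rw [label_low_spine hi, label_high_spine hj, Nat.dist]
  unfold lowerWeight upperWeight
  omega

theorem min_le_dist_label_spine {j : Fin s} (hij : (i : ℕ) + 1 = j) :
    min (lowerWeight ℓ p) (upperWeight ℓ p) ≤
      Nat.dist (label ℓ p ⟨i, none⟩) (label ℓ p ⟨j, none⟩) := by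
  rcases eq_or_mem_lowSpines_or_mem_highSpines p i with rfl | hi | hi
  · have hj : j ∈ highSpines s i := by rw [mem_highSpines]; omega
    have := weightBelow_add_add_weightAbove (w := 1) highKey_injOn hj
    simp only [weightAbove_highKey_eq_zero hij.symm, Pi.one_apply, ← card_eq_sum_ones] at this
    rw [label_pivot, label_high_spine hj, Nat.dist]
    unfold upperWeight
    omega
  all_goals rcases eq_or_mem_lowSpines_or_mem_highSpines p j with rfl | hj | hj
  · rw [label_low_spine hi, weightBelow_lowKey_eq_zero hij, label_pivot, Nat.dist]
    omega
  · rw [mem_lowSpines] at hi hj; omega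
  · exact min_le_dist_label_low_high hℓ hi hj
  · rw [mem_highSpines] at hi; omega
  · rw [Nat.dist_comm]; exact min_le_dist_label_low_high hℓ hj hi
  · rw [mem_highSpines] at hi hj; omega

theorem min_le_dist_label_leg (i : Fin s) (q : Fin (ℓ i)) :
    min (lowerWeight ℓ p) (upperWeight ℓ p) ≤
      Nat.dist (label ℓ p ⟨i, none⟩) (label ℓ p ⟨i, some q⟩) := by
  rcases eq_or_mem_lowSpines_or_mem_highSpines p i with rfl | hi | hi
  · rw [label_pivot, label_pivot_leg, Nat.dist]
    omega
  · have := weightBelow_mono (T := lowSpines s p) (key := lowKey p) (i := i) (v := 1) hℓ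
    rw [label_low_spine hi, label_low_leg hi, Nat.dist]
    omega
  · have hone := weightBelow_add_add_weightAbove (w := 1) highKey_injOn hi
    have := weightBelow_add_add_weightAbove (w := ℓ) highKey_injOn hi
    have := weightAbove_mono (T := highSpines s p) (key := highKey p) (i := i) (v := 1) hℓ
    simp only [Pi.one_apply, ← card_eq_sum_ones] at hone
    have := q.isLt
    rw [label_high_spine hi, label_high_leg hi, Nat.dist]
    unfold lowerWeight upperWeight
    omega

theorem min_le_dist_label_of_adj {u v : Σ i : Fin s, Option (Fin (ℓ i))}
    (h : (caterpillar s ℓ).Adj u v) :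
    min (lowerWeight ℓ p) (upperWeight ℓ p) ≤ Nat.dist (label ℓ p u) (label ℓ p v) := by
  obtain ⟨i, a⟩ := u
  obtain ⟨j, b⟩ := v
  rw [caterpillar, SimpleGraph.fromRel_adj] at h
  dsimp only at h
  obtain ⟨-, (⟨rfl, rfl, hij⟩ | ⟨rfl, rfl, hb⟩) | (⟨rfl, rfl, hij⟩ | ⟨rfl, rfl, ha⟩)⟩ := h
  · exact min_le_dist_label_spine hℓ hij
  · obtain ⟨q, rfl⟩ := Option.ne_none_iff_exists'.1 hb
    exact min_le_dist_label_leg hℓ i q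
  · rw [Nat.dist_comm]
    exact min_le_dist_label_spine hℓ hij
  · obtain ⟨q, rfl⟩ := Option.ne_none_iff_exists'.1 ha
    rw [Nat.dist_comm]
    exact min_le_dist_label_leg hℓ _ q

end Labeling

section Pivot

variable {ℓ : Fin s → ℕ}

theorem lowerWeight_succ {p : ℕ} (hp : p + 1 < s) : lowerWeight ℓ (p + 1) = upperWeight ℓ p := by
  have h₁ := card_lowSpines_add_card_highSpines (⟨p + 1, hp⟩ : Fin s)
  have h₂ := card_lowSpines_add_card_highSpines (⟨p, by omega⟩ : Fin s)
  dsimp only at h₁ h₂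
  rw [highSpines_succ] at h₁
  rw [lowerWeight, upperWeight, highSpines_succ]
  omega

variable (ℓ) in
def parityWeight (r : ℕ) : ℕ :=
  #({i | (i : ℕ) % 2 = r % 2} : Finset (Fin s)) +
    ∑ i ∈ ({i | (i : ℕ) % 2 ≠ r % 2} : Finset (Fin s)), ℓ i

theorem parityWeight_add_parityWeight {a b : ℕ} (hab : a % 2 ≠ b % 2) :
    parityWeight ℓ a + parityWeight ℓ b = s + ∑ i, ℓ i := by
  have hb : ∀ i : Fin s, (i : ℕ) % 2 = b % 2 ↔ ¬(i : ℕ) % 2 = a % 2 := fun i => by omega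
  simp only [parityWeight, ne_eq, hb]
  have := card_filter_add_card_filter_not (s := (univ : Finset (Fin s)))
    (fun i : Fin s => (i : ℕ) % 2 = a % 2)
  have := sum_filter_add_sum_filter_not univ (fun i : Fin s => (i : ℕ) % 2 = a % 2) ℓ
  simp only [card_univ, Fintype.card_fin, not_not] at *
  omega

theorem lowerWeight_zero_add_one (hs : 0 < s) : lowerWeight ℓ 0 + 1 = parityWeight ℓ 0 := by
  have hlow : lowSpines s 0 = ({i | (i : ℕ) % 2 = 0 % 2} : Finset (Fin s)).erase ⟨0, hs⟩ := by
    ext i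
    simp only [mem_lowSpines, mem_erase, mem_filter, mem_univ, true_and, ne_eq, Fin.ext_iff]
    omega
  have hhigh : highSpines s 0 = ({i | (i : ℕ) % 2 ≠ 0 % 2} : Finset (Fin s)) := by
    ext i; simp only [mem_highSpines, mem_filter, mem_univ, true_and]; omega
  have := card_erase_add_one (mem_filter.2 ⟨mem_univ _, rfl⟩ : (⟨0, hs⟩ : Fin s) ∈
    ({i | (i : ℕ) % 2 = 0 % 2} : Finset (Fin s)))
  rw [lowerWeight, parityWeight, hlow, hhigh]
  omega

theorem upperWeight_add_one {p : ℕ} (hp : p + 1 = s) :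
    upperWeight ℓ p + 1 = parityWeight ℓ p := by
  have hhigh : highSpines s p =
      ({i | (i : ℕ) % 2 = p % 2} : Finset (Fin s)).erase ⟨p, by omega⟩ := by
    ext i
    have := i.isLt
    simp only [mem_highSpines, mem_erase, mem_filter, mem_univ, true_and, ne_eq, Fin.ext_iff]
    omega
  have hlow : lowSpines s p = ({i | (i : ℕ) % 2 ≠ p % 2} : Finset (Fin s)) := by
    ext i
    have := i.isLt
    simp only [mem_lowSpines, mem_filter, mem_univ, true_and]
    omega
  have := card_erase_add_one (mem_filter.2 ⟨mem_univ _, rfl⟩ : (⟨p, by omega⟩ : Fin s) ∈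
    ({i | (i : ℕ) % 2 = p % 2} : Finset (Fin s)))
  rw [upperWeight, parityWeight, hlow, hhigh]
  omega

variable (ℓ) in
def pivotSeq : ℕ → ℕ
  | 0 => lowerWeight ℓ 0
  | q + 1 => upperWeight ℓ q

theorem pivotSeq_of_lt {q : ℕ} (hq : q < s) : pivotSeq ℓ q = lowerWeight ℓ q := by
  cases q with
  | zero => rfl
  | succ q => exact (lowerWeight_succ hq).symm

variable {Δ : ℕ} (hℓ : ∀ i, 1 ≤ ℓ i) (hΔ : ∀ i, ℓ i ≤ Δ)
include hℓ hΔ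

theorem parityWeight_le_pivotSeq_start (hs : 0 < s) {a : ℕ} (ha : a ≤ 1) :
    parityWeight ℓ a ≤ pivotSeq ℓ a + Δ := by
  have := lowerWeight_zero_add_one (ℓ := ℓ) hs
  have := lowerWeight_add_upperWeight ℓ ⟨0, hs⟩
  have := parityWeight_add_parityWeight (ℓ := ℓ) (a := 0) (b := 1) (by omega)
  have := hℓ ⟨0, hs⟩
  have := hΔ ⟨0, hs⟩
  interval_cases a <;> simp only [pivotSeq] at * <;> omega

theorem parityWeight_succ_le_pivotSeq_end (hs : 0 < s) {b : ℕ} (hb₁ : s ≤ b + 1)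
    (hb₂ : b ≤ s) : parityWeight ℓ (b + 1) ≤ pivotSeq ℓ b + Δ := by
  obtain ⟨p, rfl⟩ : ∃ p, s = p + 1 := ⟨s - 1, by omega⟩
  have := upperWeight_add_one (ℓ := ℓ) (p := p) rfl
  have := lowerWeight_add_upperWeight ℓ (Fin.last p)
  have := parityWeight_add_parityWeight (ℓ := ℓ) (a := p) (b := p + 1) (by omega)
  have := parityWeight_add_parityWeight (ℓ := ℓ) (a := p + 1) (b := p + 1 + 1) (by omega)
  have := hℓ (Fin.last p)
  have := hΔ (Fin.last p)
  obtain rfl | rfl : b = p ∨ b = p + 1 := by omega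
  · rw [pivotSeq_of_lt (Nat.lt_succ_self b)]
    simp only [Fin.val_last] at *
    omega
  · simp only [pivotSeq, Fin.val_last] at *
    omega

theorem exists_pivot (hs : 1 ≤ s) :
    ∃ p : Fin s, s + ∑ i, ℓ i ≤ 2 * lowerWeight ℓ p + 2 * Δ + 2 ∧
      s + ∑ i, ℓ i ≤ 2 * upperWeight ℓ p + 2 * Δ + 2 := by
  obtain ⟨q, hq, hF, hG⟩ :=
    exists_consecutive_large (u := pivotSeq ℓ) (n := s + ∑ i, ℓ i) (Δ := Δ) hs
      (fun q hq => by
        have := lowerWeight_add_upperWeight ℓ ⟨q, hq⟩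
        have := hΔ ⟨q, hq⟩
        rw [pivotSeq_of_lt hq]
        simp only [pivotSeq] at *
        omega)
      (fun a b ha hb₁ hb₂ hab => by
        have := parityWeight_le_pivotSeq_start hℓ hΔ hs ha
        have := parityWeight_succ_le_pivotSeq_end hℓ hΔ hs hb₁ hb₂
        have := parityWeight_add_parityWeight (ℓ := ℓ) (a := a) (b := b + 1) (by omega)
        omega)
  exact ⟨⟨q, hq⟩, by rwa [pivotSeq_of_lt hq] at hF, hG⟩

end Pivot

end Caterpillar

/-- Every caterpillar on `n` vertices in which each spine vertex has at least one
leg, with at most `Δ` legs per spine vertex, admits a labeling of differential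
value at least `n/2 − Δ − 1`. -/
theorem stmt_13 (s : ℕ) (hs : 1 ≤ s) (ℓ : Fin s → ℕ) (hℓ : ∀ i, 1 ≤ ℓ i) :
    ∃ c : (Σ i : Fin s, Option (Fin (ℓ i))) → ℕ, IsLabeling c ∧
      ∀ u v, (caterpillar s ℓ).Adj u v →
        (Fintype.card (Σ i : Fin s, Option (Fin (ℓ i))) : ℚ) / 2 -
          ((Finset.univ.sup ℓ : ℕ) : ℚ) - 1 ≤ (Nat.dist (c u) (c v) : ℚ) := by
  obtain ⟨p, hF, hG⟩ := Caterpillar.exists_pivot hℓ (fun i => le_sup (mem_univ i)) hs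
  refine ⟨Caterpillar.label ℓ p, Caterpillar.isLabeling_label, fun u v huv => ?_⟩
  have hmin := Caterpillar.min_le_dist_label_of_adj (p := p) hℓ huv
  have key : s + ∑ i, ℓ i ≤
      2 * Nat.dist (Caterpillar.label ℓ p u) (Caterpillar.label ℓ p v) + 2 * univ.sup ℓ + 2 := by
    omega
  rw [Caterpillar.card_vertices]
  qify at key
  push_cast
  linarith
end

section
/- Let G be a regular caterpillar with an odd number s = 2k+1 of spine vertices, each with Δ ≥ 1 legs, so n = (2k+1)(Δ+1), and let c be a labeling of G whose differential value is at least ⌈(n−Δ)/2⌉ + 1. Then no two adjacent spine vertices both receive labels in the interval [1, ⌈(n−Δ)/2⌉ − 1], and no two adjacent spine vertices both receive labels in the interval [⌈(n+Δ)/2⌉ + 1, n]. -/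
open Finset

theorem Nat.dist_lt_of_mem_Icc {a b x y d : ℕ} (hx : x ∈ Icc a b) (hy : y ∈ Icc a b)
    (hab : b < a + d) : x.dist y < d := by
  rw [mem_Icc] at hx hy
  unfold Nat.dist
  omega

theorem DiffValAtLeast.not_mem_Icc_of_adj {V : Type*} {G : SimpleGraph V} {c : V → ℕ}
    {d a b : ℕ} (hd : DiffValAtLeast G c d) {u v : V} (hadj : G.Adj u v) (hab : b < a + d) :
    ¬(c u ∈ Icc a b ∧ c v ∈ Icc a b) := fun ⟨hu, hv⟩ =>
  (hd u v hadj).not_gt (Nat.dist_lt_of_mem_Icc hu hv hab)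

theorem stmt_17_general (k Δ : ℕ)
    (c : Fin (2 * k + 1) × Fin (Δ + 1) → ℕ)
    (hd : DiffValAtLeast (regularCaterpillar (2 * k + 1) Δ) c
      (((2 * k + 1) * (Δ + 1) - Δ + 1) / 2 + 1)) :
    ∀ u v, (regularCaterpillar (2 * k + 1) Δ).Adj u v →
      u.2 = 0 → v.2 = 0 →
      (¬(c u ∈ Finset.Icc 1 (((2 * k + 1) * (Δ + 1) - Δ + 1) / 2 - 1) ∧
         c v ∈ Finset.Icc 1 (((2 * k + 1) * (Δ + 1) - Δ + 1) / 2 - 1)) ∧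
       ¬(c u ∈ Finset.Icc (((2 * k + 1) * (Δ + 1) + Δ + 1) / 2 + 1)
            ((2 * k + 1) * (Δ + 1)) ∧
         c v ∈ Finset.Icc (((2 * k + 1) * (Δ + 1) + Δ + 1) / 2 + 1)
            ((2 * k + 1) * (Δ + 1)))) := by
  intro u v hadj _ _
  -- `n = 2m + Δ - 1` with `m = kΔ + k + 1 = ⌈(n - Δ)/2⌉` and `⌈(n + Δ)/2⌉ = m + Δ`, so each
  -- interval has fewer than `m + 1` elements.
  have hn : (2 * k + 1) * (Δ + 1) = 2 * (k * Δ) + 2 * k + Δ + 1 := by ring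
  exact ⟨hd.not_mem_Icc_of_adj hadj (by omega), hd.not_mem_Icc_of_adj hadj (by omega)⟩

/-- For a regular caterpillar with `s = 2k+1` spine vertices and `Δ ≥ 1` legs per
spine vertex (`n = (2k+1)(Δ+1)`), for any labeling of differential value at least
`⌈(n−Δ)/2⌉ + 1`: no two adjacent spine vertices both get labels in
`[1, ⌈(n−Δ)/2⌉ − 1]`, and no two adjacent spine vertices both get labels in
`[⌈(n+Δ)/2⌉ + 1, n]`. -/
theorem stmt_17 (k Δ : ℕ) (hΔ : 1 ≤ Δ)
    (c : Fin (2 * k + 1) × Fin (Δ + 1) → ℕ) (hc : IsLabeling c)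
    (hd : DiffValAtLeast (regularCaterpillar (2 * k + 1) Δ) c
      (((2 * k + 1) * (Δ + 1) - Δ + 1) / 2 + 1)) :
    ∀ u v, (regularCaterpillar (2 * k + 1) Δ).Adj u v →
      u.2 = 0 → v.2 = 0 →
      (¬(c u ∈ Finset.Icc 1 (((2 * k + 1) * (Δ + 1) - Δ + 1) / 2 - 1) ∧
         c v ∈ Finset.Icc 1 (((2 * k + 1) * (Δ + 1) - Δ + 1) / 2 - 1)) ∧
       ¬(c u ∈ Finset.Icc (((2 * k + 1) * (Δ + 1) + Δ + 1) / 2 + 1)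
            ((2 * k + 1) * (Δ + 1)) ∧
         c v ∈ Finset.Icc (((2 * k + 1) * (Δ + 1) + Δ + 1) / 2 + 1)
            ((2 * k + 1) * (Δ + 1)))) :=
  stmt_17_general k Δ c hd
end
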